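/- arXiv:1705.10614 — 5 statements merged into one kernel-verified Lean document; each statement's English description precedes it below -/
import Mathlib

section
/- Let K and D be positive integers with D + 1 ≤ K, let U = gcd(K, D+1) − 1, and assume U + D < K. Let F be any field and let L be the AIR matrix of size K × (D+1), viewed over F. Then for every k ∈ {0,…,K−1}, the row L_k does not lie in the F-linear span of the rows {L_j : j ∈ I_k}, where I_k = {k−U,…,k−1} ∪ {k+1,…,k+D} with indices modulo K. Consequently L is a valid scalar linear encoding matrix of length D + 1 for the (K, D, U) SUICP-SNI over every field. -/
set_option linter.unusedVariables false
set_option maxHeartbeats 1000000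

/-- Entry (row `j`, column `k`) of the `m × n` AIR (Adjacent Independent Row) matrix,
as a 0/1 natural number, defined by the recursive construction algorithm
(stack `⌊m/n⌋` copies of `I_n`; fill the first `n - n mod (m mod n)` columns of the
remaining `m mod n` rows with horizontally stacked identities `I_{m mod n}`; recurse). -/
def airEntry : ℕ → ℕ → ℕ → ℕ → ℕ
  | m, n, j, k =>
    if hn : n = 0 then 0
    else if hr : m % n = 0 then (if j % n = k then 1 else 0)
    else if j < m - m % n then (if j % n = k then 1 else 0)
    else if k < n - n % (m % n) then (if k % (m % n) = j - (m - m % n) then 1 else 0)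
    else airEntry (m % n) (n % (m % n)) (j - (m - m % n)) (k - (n - n % (m % n)))
  termination_by m n j k => n
  decreasing_by
    have h1 : m % n < n := Nat.mod_lt _ (Nat.pos_of_ne_zero hn)
    have h2 : n % (m % n) < m % n := Nat.mod_lt _ (Nat.pos_of_ne_zero hr)
    omega
/-- Row `j` of the `m × n` AIR matrix, viewed over `F` (entries `0` and `1` of `F`). -/
def airRow (F : Type*) [Zero F] [One F] (m n j : ℕ) : Fin n → F :=
  fun k => if airEntry m n j (k : ℕ) = 1 then 1 else 0
/-- `interf K D U k j` says that the message index `j` belongs to the interference set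
`I_k = {k-U, …, k-1} ∪ {k+1, …, k+D}` of receiver `R_k`, indices taken modulo `K`. -/
def interf (K D U k j : ℕ) : Prop :=
  (∃ r : ℕ, 1 ≤ r ∧ r ≤ D ∧ (k + r) % K = j % K) ∨
  (∃ r : ℕ, 1 ≤ r ∧ r ≤ U ∧ (j + r) % K = k % K)

/-! ### Auxiliary machinery for the proof -/

private def ent (F : Type*) [Zero F] [One F] (m n j c : ℕ) : F :=
  if airEntry m n j c = 1 then 1 else 0

section Aux
variable {F : Type*} [Field F]

private lemma ent_top {m n j c : ℕ} (hn : n ≠ 0) (hj : j < m - m % n) :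
    ent F m n j c = if j % n = c then 1 else 0 := by
  unfold ent
  rw [airEntry, dif_neg hn]
  by_cases hr : m % n = 0
  · rw [dif_pos hr]; by_cases h : j % n = c <;> simp [h]
  · rw [dif_neg hr, if_pos hj]; by_cases h : j % n = c <;> simp [h]

private lemma ent_mid {m n i c : ℕ} (hn : n ≠ 0) (hr : m % n ≠ 0)
    (hc : c < n - n % (m % n)) :
    ent F m n (m - m % n + i) c = if c % (m % n) = i then 1 else 0 := by
  unfold ent
  have hj' : ¬(m - m % n + i < m - m % n) := by omega
  rw [airEntry, dif_neg hn, dif_neg hr, if_neg hj', if_pos hc]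
  have : m - m % n + i - (m - m % n) = i := by omega
  rw [this]
  by_cases h : c % (m % n) = i <;> simp [h]

private lemma ent_rec {m n i c : ℕ} (hn : n ≠ 0) (hr : m % n ≠ 0) :
    ent F m n (m - m % n + i) (n - n % (m % n) + c) = ent F (m % n) (n % (m % n)) i c := by
  unfold ent
  have hj' : ¬(m - m % n + i < m - m % n) := by omega
  have hc' : ¬(n - n % (m % n) + c < n - n % (m % n)) := by omega
  rw [airEntry, dif_neg hn, dif_neg hr, if_neg hj', if_neg hc']
  have h1 : m - m % n + i - (m - m % n) = i := by omega
  have h2 : n - n % (m % n) + c - (n - n % (m % n)) = c := by omega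
  rw [h1, h2]

private lemma mod2 {a b m : ℕ} (hm : 0 < m) (ha : a < m + m) (h : a % m = b) :
    a = b ∨ a = m + b := by
  rcases Nat.lt_or_ge a m with h1 | h1
  · left; rwa [Nat.mod_eq_of_lt h1] at h
  · right
    rw [Nat.mod_eq_sub_mod h1, Nat.mod_eq_of_lt (by omega)] at h
    omega

private lemma addmod {x d n : ℕ} (h1 : 0 < d) (h2 : d < n) : (x + d) % n ≠ x % n := by
  have hx : x % n < n := Nat.mod_lt _ (by omega)
  have h3 : (x + d) % n = (x % n + d) % n := by
    conv_lhs => rw [Nat.add_mod, Nat.mod_eq_of_lt h2]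
  rcases mod2 (by omega : 0 < n) (by omega : x % n + d < n + n) rfl with h4 | h4 <;> omega

private lemma modwin {r B c : ℕ} (hr : 0 < r) (hB : r ∣ B) (h1 : B - r ≤ c) (h2 : c < B) :
    c % r = c - (B - r) := by
  obtain ⟨b, hb⟩ := hB
  have hrb : r * b = r * (b - 1) + r := by
    cases b with
    | zero => omega
    | succ b' => simp [Nat.mul_succ]
  have hcr : c - (B - r) < r := by omega
  have hc : c = (c - (B - r)) + r * (b - 1) := by omega
  conv_lhs => rw [hc]
  rw [Nat.add_mul_mod_self_left, Nat.mod_eq_of_lt hcr]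

private lemma mod_eq_of_rep {n k q t : ℕ} (h : k = n * q + t) (ht : t < n) : k % n = t := by
  subst h; rw [Nat.mul_add_mod, Nat.mod_eq_of_lt ht]

private lemma mod_high {n m j : ℕ} (hn : 0 < n) (hd : n ∣ m) (h1 : m - n ≤ j) (h2 : j < m) :
    j % n = j - (m - n) := by
  obtain ⟨q, hq⟩ := hd
  have hq1 : n * q = n * (q - 1) + n := by
    cases q with
    | zero => omega
    | succ q' => simp [Nat.mul_succ]
  exact mod_eq_of_rep (q := q - 1) (by omega) (by omega)

private lemma e_support {n k m : ℕ} (hn : 0 < n) (h : k < m - m % n) :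
    k ≤ k % n + (m - n) := by
  have h1 := Nat.div_add_mod k n
  have h2 := Nat.div_add_mod m n
  have hmn : m % n < n := Nat.mod_lt _ hn
  have hkn : k % n < n := Nat.mod_lt _ hn
  have h3 : k / n < m / n := by
    have h4 : k < m / n * n := by rw [mul_comm]; omega
    exact (Nat.div_lt_iff_lt_mul hn).mpr h4
  have h5 : n * (k / n) + n ≤ n * (m / n) := by
    calc n * (k / n) + n = n * (k / n + 1) := by ring
    _ ≤ n * (m / n) := Nat.mul_le_mul_left n h3
  omega

private lemma gcd_chain {m n : ℕ} : Nat.gcd m n = Nat.gcd (m % n) (n % (m % n)) := by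
  rw [Nat.gcd_comm m n, Nat.gcd_rec n m, Nat.gcd_rec (m % n) n, Nat.gcd_comm]

private def dotr (F : Type*) [Field F] (m n j : ℕ) (w : ℕ → F) : F :=
  ∑ c ∈ Finset.range n, ent F m n j c * w c

private lemma dotr_add {m n j : ℕ} (w1 w2 : ℕ → F) :
    dotr F m n j (fun c => w1 c + w2 c) = dotr F m n j w1 + dotr F m n j w2 := by
  simp [dotr, mul_add, Finset.sum_add_distrib]

private lemma dotr_single {m n j a : ℕ} (ha : a < n) (x : F) :
    dotr F m n j (fun c => if c = a then x else 0) = ent F m n j a * x := by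
  unfold dotr
  rw [Finset.sum_eq_single a]
  · simp
  · intro c hc hne; simp [hne]
  · intro h; exact absurd (Finset.mem_range.mpr ha) h

private lemma dotr_top {m n j : ℕ} (hn : 0 < n) (hj : j < m - m % n) (w : ℕ → F) :
    dotr F m n j w = w (j % n) := by
  unfold dotr
  rw [Finset.sum_eq_single (j % n)]
  · rw [ent_top (by omega) hj, if_pos rfl, one_mul]
  · intro c hc hne
    rw [ent_top (by omega) hj, if_neg (fun h => hne h.symm), zero_mul]
  · intro h; exact absurd (Finset.mem_range.mpr (Nat.mod_lt _ hn)) h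

private lemma dotr_bot {m n i : ℕ} (hn : 0 < n) (hr : m % n ≠ 0) (w : ℕ → F) :
    dotr F m n (m - m % n + i) w
      = (∑ c ∈ Finset.range (n - n % (m % n)), (if c % (m % n) = i then (1:F) else 0) * w c)
        + ∑ c ∈ Finset.range (n % (m % n)),
            ent F (m % n) (n % (m % n)) i c * w (n - n % (m % n) + c) := by
  have hsn : n % (m % n) < m % n := Nat.mod_lt _ (Nat.pos_of_ne_zero hr)
  have hrn : m % n < n := Nat.mod_lt _ hn
  have hB : n - n % (m % n) ≤ n := by omega
  unfold dotr
  rw [← Finset.sum_range_add_sum_Ico _ hB]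
  congr 1
  · exact Finset.sum_congr rfl fun c hc => by
      rw [ent_mid (by omega) hr (Finset.mem_range.mp hc)]
  · rw [Finset.sum_Ico_eq_sum_range]
    have : n - (n - n % (m % n)) = n % (m % n) := by omega
    rw [this]
    exact Finset.sum_congr rfl fun c hc => by rw [ent_rec (by omega) hr]

private lemma sum_id {r B i : ℕ} (hr : 0 < r) (hrB : r ∣ B) (hB : r ≤ B) (hi : i < r)
    (v : ℕ → F) (hv : ∀ c, v c ≠ 0 → B - r ≤ c ∧ c < B) :
    ∑ c ∈ Finset.range B, (if c % r = i then (1:F) else 0) * v c = v (B - r + i) := by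
  rw [Finset.sum_eq_single (B - r + i)]
  · rw [if_pos, one_mul]
    rw [modwin hr hrB (by omega) (by omega)]
    omega
  · intro c hc hne
    by_cases hvc : v c = 0
    · rw [hvc, mul_zero]
    · have h1 := hv c hvc
      rw [modwin hr hrB h1.1 h1.2, if_neg (by omega), zero_mul]
  · intro h
    by_cases hvc : v (B - r + i) = 0
    · rw [hvc, mul_zero]
    · have h1 := hv _ hvc
      exact absurd (Finset.mem_range.mpr (by omega)) h

private lemma ent_colzero {m n j c : ℕ} (hn : 0 < n) (hnm : n ≤ m)
    (hc : c + 2 ≤ Nat.gcd m n) (hj1 : m - Nat.gcd m n + c < j) (hj2 : j < m) :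
    ent F m n j c = 0 := by
  have hg1 : 0 < Nat.gcd m n := Nat.gcd_pos_of_pos_right _ hn
  have hgn : Nat.gcd m n ∣ n := Nat.gcd_dvd_right _ _
  have hgle : Nat.gcd m n ≤ n := Nat.le_of_dvd hn hgn
  by_cases hr : m % n = 0
  · have hnd : n ∣ m := Nat.dvd_of_mod_eq_zero hr
    have hgn' : Nat.gcd m n = n := Nat.gcd_eq_right hnd
    rw [ent_top (by omega) (by omega)]
    rw [mod_high hn hnd (by omega) hj2]
    rw [if_neg (by omega)]
  · have hgr : Nat.gcd m n ∣ m % n := by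
      rw [Nat.dvd_mod_iff hgn]; exact Nat.gcd_dvd_left _ _
    have hrpos : 0 < m % n := Nat.pos_of_ne_zero hr
    have hgler : Nat.gcd m n ≤ m % n := Nat.le_of_dvd hrpos hgr
    have hrn : m % n < n := Nat.mod_lt _ hn
    have hdn := Nat.div_add_mod n (m % n)
    have hsn : n % (m % n) < m % n := Nat.mod_lt _ hrpos
    have hq2 : 1 ≤ n / (m % n) := (Nat.one_le_div_iff hrpos).mpr (le_of_lt hrn)
    have h8 : (m % n) * 1 ≤ (m % n) * (n / (m % n)) := Nat.mul_le_mul_left _ hq2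
    have hB1 : m % n ≤ n - n % (m % n) := by omega
    have hji : j = m - m % n + (j - (m - m % n)) := by omega
    rw [hji, ent_mid (by omega) hr (by omega)]
    rw [Nat.mod_eq_of_lt (by omega)]
    rw [if_neg (by omega)]

private lemma dotr_bot_win {m n i lo : ℕ} (hn : 0 < n) (hr : m % n ≠ 0)
    (hB1 : m % n ≤ n - n % (m % n)) (hlo : n - n % (m % n) - m % n ≤ lo) (hi : i < m % n)
    (coef : ℕ → F) :
    dotr F m n (m - m % n + i) (fun c => if lo ≤ c ∧ c < n - n % (m % n) then coef c else 0)
      = if lo ≤ n - n % (m % n) - m % n + i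
        then coef (n - n % (m % n) - m % n + i) else 0 := by
  have hrp : 0 < m % n := Nat.pos_of_ne_zero hr
  have hBd : (m % n) ∣ (n - n % (m % n)) :=
    ⟨n / (m % n), by have := Nat.div_add_mod n (m % n); omega⟩
  rw [dotr_bot hn hr]
  have h1 : ∀ c' ∈ Finset.range (n % (m % n)),
      ent F (m % n) (n % (m % n)) i c' *
        (fun c => if lo ≤ c ∧ c < n - n % (m % n) then coef c else 0) (n - n % (m % n) + c')
        = 0 := by
    intro c' hc'
    beta_reduce
    rw [if_neg (by omega), mul_zero]
  rw [Finset.sum_eq_zero h1, add_zero]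
  have hv : ∀ c, (fun c => if lo ≤ c ∧ c < n - n % (m % n) then coef c else 0) c ≠ 0 →
      n - n % (m % n) - m % n ≤ c ∧ c < n - n % (m % n) := by
    intro c hc
    by_cases hcc : lo ≤ c ∧ c < n - n % (m % n)
    · exact ⟨by omega, hcc.2⟩
    · exfalso; beta_reduce at hc; rw [if_neg hcc] at hc; exact hc rfl
  rw [sum_id hrp hBd hB1 hi _ hv]
  beta_reduce
  by_cases hcc : lo ≤ n - n % (m % n) - m % n + i
  · rw [if_pos ⟨hcc, by omega⟩, if_pos hcc]
  · rw [if_neg (by omega), if_neg hcc]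

private lemma dotr_bot_emb {m n i : ℕ} (hn : 0 < n) (hr : m % n ≠ 0) (coef : ℕ → F) :
    dotr F m n (m - m % n + i)
        (fun c => if n - n % (m % n) ≤ c then coef (c - (n - n % (m % n))) else 0)
      = dotr F (m % n) (n % (m % n)) i coef := by
  rw [dotr_bot hn hr]
  have h1 : ∀ c ∈ Finset.range (n - n % (m % n)),
      (if c % (m % n) = i then (1:F) else 0) *
        (fun c => if n - n % (m % n) ≤ c then coef (c - (n - n % (m % n))) else 0) c = 0 := by
    intro c hc
    have hcl := Finset.mem_range.mp hc
    beta_reduce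
    rw [if_neg (show ¬(n - n % (m % n) ≤ c) by omega), mul_zero]
  rw [Finset.sum_eq_zero h1, zero_add]
  unfold dotr
  refine Finset.sum_congr rfl fun c hc => ?_
  beta_reduce
  rw [if_pos (Nat.le_add_right _ _), Nat.add_sub_cancel_left]

end Aux
section Key
variable {F : Type*} [Field F]

private theorem key (F : Type*) [Field F] :
    ∀ n m k : ℕ, 0 < n → n ≤ m → k < m →
    ∃ w : ℕ → F,
      dotr F m n k w = 1 ∧
      (∀ c, w c ≠ 0 → c < n ∧ c ≤ k ∧ k ≤ c + (m - n)) ∧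
      (∀ j, j < m →
        ((∃ d, 1 ≤ d ∧ d ≤ n - 1 ∧ (k + d) % m = j) ∨
         (∃ d, 1 ≤ d ∧ d ≤ Nat.gcd m n - 1 ∧ (j + d) % m = k)) →
        dotr F m n j w = 0) := by
  intro n
  induction n using Nat.strong_induction_on with
  | _ n IH =>
  intro m k hn hnm hk
  have hdm := Nat.div_add_mod m n
  have hrn : m % n < n := Nat.mod_lt _ hn
  have hgpos : 0 < Nat.gcd m n := Nat.gcd_pos_of_pos_right _ hn
  have hgn : Nat.gcd m n ≤ n := Nat.le_of_dvd hn (Nat.gcd_dvd_right _ _)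
  by_cases hr0 : m % n = 0
  -- ================= CASE 0 : m % n = 0 =================
  · have hnd : n ∣ m := Nat.dvd_of_mod_eq_zero hr0
    obtain ⟨q, hq⟩ := hnd
    have hkn : k % n < n := Nat.mod_lt _ hn
    refine ⟨fun c => if c = k % n then 1 else 0, ?_, ?_, ?_⟩
    · rw [dotr_single hkn, ent_top (by omega) (by omega), if_pos rfl, one_mul]
    · intro c hc
      have hcc : c = k % n := by by_contra h; simp [h] at hc
      subst hcc
      exact ⟨hkn, Nat.mod_le _ _, e_support hn (by omega)⟩
    · intro j hj hcond
      rw [dotr_single hkn]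
      rw [ent_top (by omega) (by omega)]
      have hjn : j % n ≠ k % n := by
        rcases hcond with ⟨d, hd1, hd2, hd3⟩ | ⟨d, hd1, hd2, hd3⟩
        · rcases mod2 (by omega) (by omega) hd3 with h | h
          · rw [← h]; exact addmod (by omega) (by omega)
          · have h5 : j % n = (k + d) % n := by
              rw [h, hq, Nat.mul_add_mod]
            rw [h5]; exact addmod (by omega) (by omega)
        · have hdd : d < n := by omega
          rcases mod2 (by omega) (by omega) hd3 with h | h
          · rw [← h]; exact fun hh => addmod (by omega) hdd hh.symm
          · have h5 : k % n = (j + d) % n := by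
              rw [h, hq, Nat.mul_add_mod]
            rw [h5]; exact fun hh => addmod (by omega) hdd hh.symm
      rw [if_neg hjn, zero_mul]
  -- ================= m % n ≥ 1 =================
  · have hrpos : 0 < m % n := Nat.pos_of_ne_zero hr0
    have hdn := Nat.div_add_mod n (m % n)
    have hsn : n % (m % n) < m % n := Nat.mod_lt _ hrpos
    have hq1 : 1 ≤ m / n := (Nat.one_le_div_iff hn).mpr hnm
    have hMd : n ∣ m - m % n := ⟨m / n, by omega⟩
    have hMn : n ≤ m - m % n := by
      have h8 : n * 1 ≤ n * (m / n) := Nat.mul_le_mul_left n hq1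
      omega
    have hq2 : 1 ≤ n / (m % n) := (Nat.one_le_div_iff hrpos).mpr (le_of_lt hrn)
    have hBd : (m % n) ∣ (n - n % (m % n)) := ⟨n / (m % n), by omega⟩
    have hB1 : m % n ≤ n - n % (m % n) := by
      have h8 : (m % n) * 1 ≤ (m % n) * (n / (m % n)) := Nat.mul_le_mul_left _ hq2
      omega
    have hM2 : n * (m / n) = n ∨ 2 * n ≤ n * (m / n) := by
      rcases Nat.lt_or_ge (m / n) 2 with hh | hh
      · left
        have h9 : m / n = 1 := by omega
        rw [h9, Nat.mul_one]
      · right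
        calc 2 * n = n * 2 := by ring
          _ ≤ n * (m / n) := Nat.mul_le_mul_left n hh
    have hgg : Nat.gcd m n = Nat.gcd (m % n) (n % (m % n)) := gcd_chain
    have hgr : Nat.gcd m n ≤ m % n := by
      rw [hgg]; exact Nat.le_of_dvd hrpos (Nat.gcd_dvd_left _ _)
    rcases Nat.lt_or_ge k (m - m % n) with hktop | hkbot
    · rcases le_or_gt (k + n) (m - m % n) with hk1 | hk2
      -- ================= CASE 1 : top row, window all top =================
      · have hkn : k % n < n := Nat.mod_lt _ hn
        refine ⟨fun c => if c = k % n then 1 else 0, ?_, ?_, ?_⟩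
        · rw [dotr_single hkn, ent_top (by omega) (by omega), if_pos rfl, one_mul]
        · intro c hc
          have hcc : c = k % n := by by_contra h; simp [h] at hc
          subst hcc
          exact ⟨hkn, Nat.mod_le _ _, e_support hn (by omega)⟩
        · intro j hj hcond
          rw [dotr_single hkn]
          rcases hcond with ⟨d, hd1, hd2, hd3⟩ | ⟨d, hd1, hd2, hd3⟩
          · rcases mod2 (by omega) (by omega) hd3 with h | h
            · -- j = k + d, top row
              rw [ent_top (by omega) (show j < m - m % n by omega), ← h,
                  if_neg (addmod (by omega) (by omega)), zero_mul]
            · omega  -- impossible: k + d < m ≤ j + m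
          · rcases mod2 (by omega) (by omega) hd3 with h | h
            · -- k = j + d, j top row
              have hjt : j < m - m % n := by omega
              have h6 : (j + d) % n ≠ j % n := addmod (by omega) (by omega)
              rw [ent_top (by omega) hjt,
                  if_neg (fun hh => h6 (by rw [h]; exact hh.symm)), zero_mul]
            · -- k + m = j + d : j bottom row
              have hkd : k < d := by omega
              have hkg : k < Nat.gcd m n := by omega
              have hknk : k % n = k := Nat.mod_eq_of_lt (by omega)
              have hji : j = m - m % n + (k + m % n - d) := by omega
              rw [hknk, hji, ent_mid (by omega) hr0 (by omega),
                  Nat.mod_eq_of_lt (show k < m % n by omega), if_neg (by omega), zero_mul]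
      -- ================= CASE 2 : top row near bottom =================
      · obtain ⟨t, ht⟩ : ∃ t, t = k + n - (m - m % n) := ⟨_, rfl⟩
        have ht1 : 1 ≤ t := by omega
        have ht2 : t ≤ n - 1 := by omega
        have hkeq : k + n = (m - m % n) + t := by omega
        have hkt : k % n = t := by rw [mod_high hn hMd (by omega) hktop]; omega
        rcases Nat.lt_or_ge t (m % n) with h2a | h2bc
        -- ----- CASE 2a : t < m % n -----
        · refine ⟨fun c => if c = t then 1 else 0, ?_, ?_, ?_⟩
          · rw [dotr_single (show t < n by omega), ent_top (by omega) hktop, hkt,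
                if_pos rfl, one_mul]
          · intro c hc
            have hcc : c = t := by by_contra h; simp [h] at hc
            subst hcc
            exact ⟨by omega, by omega, by omega⟩
          · intro j hj hcond
            rw [dotr_single (show t < n by omega)]
            suffices hz : ent F m n j t = 0 by rw [hz, zero_mul]
            rcases hcond with ⟨d, hd1, hd2, hd3⟩ | ⟨d, hd1, hd2, hd3⟩
            · rcases mod2 (by omega) (by omega) hd3 with h | h
              · rcases Nat.lt_or_ge j (m - m % n) with hjm | hjm
                · rw [ent_top (by omega) hjm, mod_high hn hMd (by omega) hjm,
                      if_neg (by omega)]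
                · have hji : j = m - m % n + (j - (m - m % n)) := by omega
                  rw [hji, ent_mid (by omega) hr0 (by omega),
                      Nat.mod_eq_of_lt (show t < m % n from h2a), if_neg (by omega)]
              · rw [ent_top (by omega) (show j < m - m % n by omega),
                    Nat.mod_eq_of_lt (show j < n by omega), if_neg (by omega)]
            · rcases mod2 (by omega) (by omega) hd3 with h | h
              · rcases Nat.lt_or_ge j (m - m % n - n) with hjm | hjm
                · rw [ent_top (by omega) (by omega),
                      mod_high hn (Nat.dvd_sub hMd dvd_rfl) (by omega) hjm,
                      if_neg (by omega)]
                · rw [ent_top (by omega) (by omega), mod_high hn hMd hjm (by omega),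
                      if_neg (by omega)]
              · have hkd : k < d := by omega
                have hji : j = m - m % n + (k + m % n - d) := by omega
                rw [hji, ent_mid (by omega) hr0 (by omega),
                    Nat.mod_eq_of_lt (show t < m % n from h2a), if_neg (by omega)]
        · rcases Nat.lt_or_ge t (n - n % (m % n)) with h2b | h2c
          -- ----- CASE 2b : m % n ≤ t < n - n % (m % n) -----
          · refine ⟨fun c => (if c = t then (1:F) else 0) +
                (if c = t - m % n then -1 else 0), ?_, ?_, ?_⟩
            · rw [dotr_add, dotr_single (show t < n by omega),
                  dotr_single (show t - m % n < n by omega),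
                  ent_top (by omega) hktop, ent_top (by omega) hktop, hkt,
                  if_pos rfl, if_neg (show ¬(t = t - m % n) by omega),
                  one_mul, zero_mul, add_zero]
            · intro c hc
              by_cases h1 : c = t
              · subst h1; exact ⟨by omega, by omega, by omega⟩
              · by_cases h2 : c = t - m % n
                · subst h2; exact ⟨by omega, by omega, by omega⟩
                · exfalso; simp [h1, h2] at hc
            · intro j hj hcond
              rw [dotr_add, dotr_single (show t < n by omega),
                  dotr_single (show t - m % n < n by omega)]
              rcases Nat.lt_or_ge j (m - m % n) with hjm | hjm
              · rw [ent_top (by omega) hjm, ent_top (by omega) hjm]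
                suffices hz : j % n ≠ t ∧ j % n ≠ t - m % n by
                  rw [if_neg hz.1, if_neg hz.2, zero_mul, zero_mul, add_zero]
                rcases hcond with ⟨d, hd1, hd2, hd3⟩ | ⟨d, hd1, hd2, hd3⟩
                · rcases mod2 (by omega) (by omega) hd3 with h | h
                  · rw [mod_high hn hMd (by omega) hjm]; omega
                  · rw [Nat.mod_eq_of_lt (show j < n by omega)]; omega
                · rcases mod2 (by omega) (by omega) hd3 with h | h
                  · rcases Nat.lt_or_ge j (m - m % n - n) with hjm2 | hjm2
                    · rw [mod_high hn (Nat.dvd_sub hMd dvd_rfl) (by omega) hjm2]; omega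
                    · rw [mod_high hn hMd hjm2 (by omega)]; omega
                  · omega
              · have hji : j = m - m % n + (j - (m - m % n)) := by omega
                rw [hji, ent_mid (by omega) hr0 (show t < n - n % (m % n) from h2b),
                    ent_mid (by omega) hr0 (show t - m % n < n - n % (m % n) by omega)]
                have hteq : t % (m % n) = (t - m % n) % (m % n) := by
                  conv_lhs => rw [show t = (t - m % n) + m % n by omega, Nat.add_mod_right]
                rw [hteq]
                by_cases hcase : (t - m % n) % (m % n) = j - (m - m % n)
                · rw [if_pos hcase]; ring
                · rw [if_neg hcase]; ring
          -- ----- CASE 2c : n - n % (m % n) ≤ t -----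
          · obtain ⟨c0, hc0⟩ : ∃ c0, c0 = t - (n - n % (m % n)) := ⟨_, rfl⟩
            have hsp : 0 < n % (m % n) := by omega
            have hc0s : c0 < n % (m % n) := by omega
            have hgs : Nat.gcd m n ≤ n % (m % n) := by
              rw [hgg]; exact Nat.le_of_dvd hsp (Nat.gcd_dvd_right _ _)
            have hdrs := Nat.div_add_mod (m % n) (n % (m % n))
            have hrss : (m % n) % (n % (m % n)) < n % (m % n) := Nat.mod_lt _ hsp
            have hq3 : 1 ≤ (m % n) / (n % (m % n)) :=
              (Nat.one_le_div_iff hsp).mpr (le_of_lt hsn)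
            have h8 : (n % (m % n)) * 1 ≤ (n % (m % n)) * ((m % n) / (n % (m % n))) :=
              Nat.mul_le_mul_left _ hq3
            have hsB : n % (m % n) ≤ m % n - (m % n) % (n % (m % n)) := by omega
            refine ⟨fun c => (if c = t then (1:F) else 0) +
              (if n - n % (m % n) - m % n + c0 ≤ c ∧ c < n - n % (m % n)
               then -(ent F (m % n) (n % (m % n)) (c - (n - n % (m % n) - m % n)) c0)
               else 0), ?_, ?_, ?_⟩
            · rw [dotr_top hn hktop, hkt]
              beta_reduce
              rw [if_pos rfl,
                  if_neg (show ¬(n - n % (m % n) - m % n + c0 ≤ t ∧ t < n - n % (m % n)) by omega),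
                  add_zero]
            · intro c hc
              by_cases h1 : c = t
              · subst h1; exact ⟨by omega, by omega, by omega⟩
              · by_cases h2 : n - n % (m % n) - m % n + c0 ≤ c ∧ c < n - n % (m % n)
                · exact ⟨by omega, by omega, by omega⟩
                · exfalso; simp [h1, h2] at hc
            · intro j hj hcond
              rcases Nat.lt_or_ge j (m - m % n) with hjm | hjm
              · -- top row
                rw [dotr_top hn hjm]
                beta_reduce
                rcases hcond with ⟨d, hd1, hd2, hd3⟩ | ⟨d, hd1, hd2, hd3⟩
                · rcases mod2 (by omega) (by omega) hd3 with h | h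
                  · rw [mod_high hn hMd (by omega) hjm,
                        if_neg (show ¬(j - (m - m % n - n) = t) by omega),
                        if_neg (by omega), add_zero]
                  · rw [Nat.mod_eq_of_lt (show j < n by omega),
                        if_neg (show ¬(j = t) by omega), if_neg (by omega), add_zero]
                · rcases mod2 (by omega) (by omega) hd3 with h | h
                  · rw [mod_high hn hMd (by omega) hjm,
                        if_neg (show ¬(j - (m - m % n - n) = t) by omega), zero_add]
                    by_cases hcc : n - n % (m % n) - m % n + c0 ≤ j - (m - m % n - n) ∧
                        j - (m - m % n - n) < n - n % (m % n)
                    · rw [if_pos hcc,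
                          show j - (m - m % n - n) - (n - n % (m % n) - m % n)
                              = m % n + c0 - d by omega,
                          ent_colzero hsp (le_of_lt hsn) (by rw [← hgg]; omega)
                            (by rw [← hgg]; omega) (by omega), neg_zero]
                    · rw [if_neg hcc]
                  · omega
              · -- bottom row
                clear hcond
                have hji : j = m - m % n + (j - (m - m % n)) := by omega
                rw [hji, dotr_add, dotr_single (show t < n by omega),
                    show t = n - n % (m % n) + c0 by omega, ent_rec (by omega) hr0,
                    dotr_bot_win hn hr0 hB1 (by omega) (show j - (m - m % n) < m % n by omega)]
                by_cases hge : n - n % (m % n) - m % n + c0 ≤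
                    n - n % (m % n) - m % n + (j - (m - m % n))
                · rw [if_pos hge]
                  beta_reduce
                  rw [show n - n % (m % n) - m % n + (j - (m - m % n)) - (n - n % (m % n) - m % n)
                      = j - (m - m % n) by omega]
                  ring
                · rw [if_neg hge, add_zero,
                      ent_top (show n % (m % n) ≠ 0 by omega)
                        (show j - (m - m % n) < m % n - (m % n) % (n % (m % n)) by omega),
                      Nat.mod_eq_of_lt (show j - (m - m % n) < n % (m % n) by omega),
                      if_neg (by omega), zero_mul]
    -- ================= CASE 3 : bottom row =================
    · obtain ⟨i, hieq⟩ : ∃ i, k = m - m % n + i := ⟨k - (m - m % n), by omega⟩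
      subst hieq
      have hilt : i < m % n := by omega
      by_cases hs0 : n % (m % n) = 0
      -- ----- CASE 3a : n % (m % n) = 0 -----
      · have hrn' : m % n ∣ n := by
          have := hBd; rwa [hs0, Nat.sub_zero] at this
        have hgr' : Nat.gcd m n = m % n := by rw [hgg, hs0, Nat.gcd_zero_right]
        refine ⟨fun c => if c = n - m % n + i then (1:F) else 0, ?_, ?_, ?_⟩
        · rw [dotr_single (show n - m % n + i < n by omega),
              ent_mid (by omega) hr0 (by omega),
              modwin hrpos hrn' (by omega) (by omega), if_pos (by omega), one_mul]
        · intro c hc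
          have hcc : c = n - m % n + i := by by_contra h; simp [h] at hc
          subst hcc
          exact ⟨by omega, by omega, by omega⟩
        · intro j hj hcond
          rw [dotr_single (show n - m % n + i < n by omega)]
          suffices hz : ent F m n j (n - m % n + i) = 0 by rw [hz, zero_mul]
          rcases hcond with ⟨d, hd1, hd2, hd3⟩ | ⟨d, hd1, hd2, hd3⟩
          · rcases mod2 (by omega) (by omega) hd3 with h | h
            · have hji : j = m - m % n + (i + d) := by omega
              rw [hji, ent_mid (by omega) hr0 (by omega),
                  modwin hrpos hrn' (by omega) (by omega), if_neg (by omega)]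
            · rw [ent_top (by omega) (show j < m - m % n by omega),
                  Nat.mod_eq_of_lt (show j < n by omega), if_neg (by omega)]
          · rcases mod2 (by omega) (by omega) hd3 with h | h
            · rcases Nat.lt_or_ge j (m - m % n) with hjm | hjm
              · rw [ent_top (by omega) hjm, mod_high hn hMd (by omega) hjm,
                    if_neg (by omega)]
              · have hji : j = m - m % n + (i - d) := by omega
                rw [hji, ent_mid (by omega) hr0 (by omega),
                    modwin hrpos hrn' (by omega) (by omega), if_neg (by omega)]
            · omega
      -- ----- CASE 3b : n % (m % n) ≥ 1 -----
      · have hsp : 0 < n % (m % n) := Nat.pos_of_ne_zero hs0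
        have hgs : Nat.gcd m n ≤ n % (m % n) := by
          rw [hgg]; exact Nat.le_of_dvd hsp (Nat.gcd_dvd_right _ _)
        obtain ⟨w', hw1, hw2, hw3⟩ :=
          IH (n % (m % n)) (by omega) (m % n) i hsp (le_of_lt hsn) hilt
        refine ⟨fun c => (if n - n % (m % n) ≤ c then w' (c - (n - n % (m % n))) else 0) +
          (if n - n % (m % n) - m % n + (n % (m % n) + i) ≤ c ∧ c < n - n % (m % n)
           then -(dotr F (m % n) (n % (m % n)) (c - (n - n % (m % n) - m % n)) w')
           else 0), ?_, ?_, ?_⟩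
        · rw [dotr_add, dotr_bot_emb hn hr0, dotr_bot_win hn hr0 hB1 (by omega) hilt, hw1,
              if_neg (show ¬(n - n % (m % n) - m % n + (n % (m % n) + i) ≤
                n - n % (m % n) - m % n + i) by omega), add_zero]
        · intro c hc
          by_cases h1 : n - n % (m % n) ≤ c
          · by_cases h1b : w' (c - (n - n % (m % n))) = 0
            · exfalso
              simp [h1, h1b, show ¬(c < n - n % (m % n)) by omega] at hc
            · obtain ⟨hs1, hs2, hs3⟩ := hw2 _ h1b
              exact ⟨by omega, by omega, by omega⟩
          · by_cases h2 : n - n % (m % n) - m % n + (n % (m % n) + i) ≤ c ∧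
                c < n - n % (m % n)
            · exact ⟨by omega, by omega, by omega⟩
            · exfalso; simp [h1, h2] at hc
        · intro j hj hcond
          rcases hcond with ⟨d, hd1, hd2, hd3⟩ | ⟨d, hd1, hd2, hd3⟩
          · rcases mod2 (by omega) (by omega) hd3 with h | h
            · -- j = k + d : bottom row
              have hji : j = m - m % n + (j - (m - m % n)) := by omega
              rw [hji, dotr_add, dotr_bot_emb hn hr0,
                  dotr_bot_win hn hr0 hB1 (by omega) (show j - (m - m % n) < m % n by omega)]
              by_cases hge : n - n % (m % n) - m % n + (n % (m % n) + i) ≤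
                  n - n % (m % n) - m % n + (j - (m - m % n))
              · rw [if_pos hge,
                    show n - n % (m % n) - m % n + (j - (m - m % n)) - (n - n % (m % n) - m % n)
                      = j - (m - m % n) by omega]
                ring
              · rw [if_neg hge, add_zero]
                refine hw3 _ (by omega) (Or.inl ⟨d, hd1, by omega, ?_⟩)
                rw [Nat.mod_eq_of_lt (by omega)]; omega
            · -- j + m = k + d : wrapped top row
              have hjn : j < n := by omega
              rw [dotr_top hn (by omega)]
              beta_reduce
              rw [Nat.mod_eq_of_lt hjn]
              by_cases hB2 : n - n % (m % n) ≤ j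
              · have hz : w' (j - (n - n % (m % n))) = 0 := by
                  by_contra hnz
                  obtain ⟨u1, u2, u3⟩ := hw2 _ hnz
                  omega
                rw [if_pos hB2, hz,
                    if_neg (show ¬(n - n % (m % n) - m % n + (n % (m % n) + i) ≤ j ∧
                      j < n - n % (m % n)) by omega), add_zero]
              · rw [if_neg hB2,
                    if_neg (show ¬(n - n % (m % n) - m % n + (n % (m % n) + i) ≤ j ∧
                      j < n - n % (m % n)) by omega), add_zero]
          · rcases mod2 (by omega) (by omega) hd3 with h | h
            · rcases Nat.lt_or_ge j (m - m % n) with hjm | hjm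
              · -- top row below the bottom block
                rw [dotr_top hn hjm]
                beta_reduce
                rw [mod_high hn hMd (by omega) hjm]
                have hz : w' (j - (m - m % n - n) - (n - n % (m % n))) = 0 := by
                  by_contra hnz
                  obtain ⟨u1, u2, u3⟩ := hw2 _ hnz
                  omega
                rw [if_pos (show n - n % (m % n) ≤ j - (m - m % n - n) by omega), hz,
                    if_neg (show ¬(n - n % (m % n) - m % n + (n % (m % n) + i) ≤
                      j - (m - m % n - n) ∧ j - (m - m % n - n) < n - n % (m % n)) by omega),
                    add_zero]
              · -- bottom row below i
                have hji : j = m - m % n + (j - (m - m % n)) := by omega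
                rw [hji, dotr_add, dotr_bot_emb hn hr0,
                    dotr_bot_win hn hr0 hB1 (by omega) (show j - (m - m % n) < m % n by omega),
                    if_neg (show ¬(n - n % (m % n) - m % n + (n % (m % n) + i) ≤
                      n - n % (m % n) - m % n + (j - (m - m % n))) by omega), add_zero]
                refine hw3 _ (by omega) (Or.inr ⟨d, hd1, by rw [← hgg]; omega, ?_⟩)
                rw [Nat.mod_eq_of_lt (by omega)]; omega
            · omega

end Key

/-- For the `(K, D, U)` SUICP-SNI with `U = gcd(K, D+1) - 1`, the
`K × (D+1)` AIR matrix is a valid scalar linear encoding matrix over every field: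
each row `L_k` is outside the span of the rows indexed by the interference set `I_k`. -/
theorem air_optimal_scalar_code (F : Type*) [Field F] (K D U : ℕ)
    (hK : 0 < K) (hD : 0 < D) (hDK : D + 1 ≤ K)
    (hU : U = Nat.gcd K (D + 1) - 1) (hUDK : U + D < K) :
    ∀ k : Fin K, airRow F K (D + 1) (k : ℕ) ∉ Submodule.span F
      { v : Fin (D + 1) → F | ∃ j : Fin K,
          interf K D U (k : ℕ) (j : ℕ) ∧ v = airRow F K (D + 1) (j : ℕ) } := by
  intro k hmem
  obtain ⟨w, hw1, hw2, hw3⟩ := key F (D + 1) K (k : ℕ) (by omega) hDK k.isLt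
  let φ : (Fin (D + 1) → F) →ₗ[F] F :=
    { toFun := fun v => ∑ c : Fin (D + 1), v c * w (c : ℕ)
      map_add' := by intro x y; simp [add_mul, Finset.sum_add_distrib]
      map_smul' := by intro a x; simp [Finset.mul_sum, mul_assoc] }
  have hconv : ∀ j : ℕ, φ (airRow F K (D + 1) j) = dotr F K (D + 1) j w := by
    intro j
    show (∑ c : Fin (D + 1), airRow F K (D + 1) j c * w (c : ℕ)) = dotr F K (D + 1) j w
    unfold dotr
    exact Fin.sum_univ_eq_sum_range (fun c => ent F K (D + 1) j c * w c) (D + 1)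
  have hker : Submodule.span F
      { v : Fin (D + 1) → F | ∃ j : Fin K,
          interf K D U (k : ℕ) (j : ℕ) ∧ v = airRow F K (D + 1) (j : ℕ) }
        ≤ LinearMap.ker φ := by
    rw [Submodule.span_le]
    rintro v ⟨j, hint, rfl⟩
    have hcond : (∃ d, 1 ≤ d ∧ d ≤ (D + 1) - 1 ∧ ((k : ℕ) + d) % K = (j : ℕ)) ∨
        (∃ d, 1 ≤ d ∧ d ≤ Nat.gcd K (D + 1) - 1 ∧ ((j : ℕ) + d) % K = (k : ℕ)) := by
      rcases hint with ⟨r, h1, h2, h3⟩ | ⟨r, h1, h2, h3⟩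
      · exact Or.inl ⟨r, h1, by omega, by rw [h3]; exact Nat.mod_eq_of_lt j.isLt⟩
      · exact Or.inr ⟨r, h1, by omega, by rw [h3]; exact Nat.mod_eq_of_lt k.isLt⟩
    have h0 := hw3 (j : ℕ) j.isLt hcond
    simp only [SetLike.mem_coe, LinearMap.mem_ker]
    rw [hconv]
    exact h0
  have h0 : φ (airRow F K (D + 1) (k : ℕ)) = 0 := LinearMap.mem_ker.mp (hker hmem)
  rw [hconv, hw1] at h0
  exact one_ne_zero h0
end

section
/- Let m ≥ n ≥ 1 be integers, let F be any field, and let L be the AIR matrix of size m × n viewed over F, with rows L_0,…,L_{m−1}. Then for every k ∈ {0,…,m−1}, the row L_k does not lie in the F-linear span of the rows {L_{k+1}, L_{k+2}, …, L_{k+n−1}} ∪ {L_{k−gcd(m,n)+1}, …, L_{k−2}, L_{k−1}}, where all row indices are taken modulo m. -/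
set_option linter.unusedVariables false

namespace AirAux

lemma mod_add_dvd {n b : ℕ} (a : ℕ) (h : n ∣ b) : (a + b) % n = a % n := by
  obtain ⟨e, rfl⟩ := h; rw [Nat.add_mul_mod_self_left]

lemma mod_decomp {n a v : ℕ} (h : n ∣ a) (hv : v < n) : (a + v) % n = v := by
  rw [Nat.add_comm, mod_add_dvd v h, Nat.mod_eq_of_lt hv]

lemma modeq_cancel_ne {n k a b : ℕ} (ha : a < n) (hb : b < n) (hne : a ≠ b) :
    (k + a) % n ≠ (k + b) % n := by
  intro h
  have h2 : a ≡ b [MOD n] := Nat.ModEq.add_left_cancel' k h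
  unfold Nat.ModEq at h2
  rw [Nat.mod_eq_of_lt ha, Nat.mod_eq_of_lt hb] at h2
  exact hne h2

lemma mod_between {a m : ℕ} (h1 : m ≤ a) (h2 : a - m < m) : a % m = a - m := by
  conv_lhs => rw [← Nat.sub_add_cancel h1]
  rw [Nat.add_mod_right, Nat.mod_eq_of_lt h2]

lemma dvd_mod_of_dvd {g m n : ℕ} (h1 : g ∣ m) (h2 : g ∣ n) : g ∣ m % n := by
  have : m % n = m - n * (m / n) := by
    have := Nat.div_add_mod m n; omega
  rw [this]
  exact Nat.dvd_sub h1 (h2.mul_right _)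

lemma dvd_sub_mod {g m n : ℕ} (h1 : g ∣ m) (h2 : g ∣ n) : g ∣ (m - m % n) :=
  Nat.dvd_sub h1 (dvd_mod_of_dvd h1 h2)

lemma n_dvd_sub_mod (m n : ℕ) : n ∣ (m - m % n) := by
  have : m - m % n = n * (m / n) := by have := Nat.div_add_mod m n; omega
  rw [this]; exact Dvd.intro _ rfl

lemma mod_sub_eq {g a b : ℕ} (h : b ≤ a) (hd : g ∣ b) : a % g = (a - b) % g := by
  conv_lhs => rw [← Nat.sub_add_cancel h]
  rw [mod_add_dvd _ hd]


lemma airEntry_unfold (m n j c : ℕ) : airEntry m n j c =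
    if n = 0 then 0
    else if m % n = 0 then (if j % n = c then 1 else 0)
    else if j < m - m % n then (if j % n = c then 1 else 0)
    else if c < n - n % (m % n) then (if c % (m % n) = j - (m - m % n) then 1 else 0)
    else airEntry (m % n) (n % (m % n)) (j - (m - m % n)) (c - (n - n % (m % n))) := by
  rw [airEntry.eq_def]
  rfl

/-- entries in range where the row is a stacked identity row -/
lemma airEntry_top {m n j c : ℕ} (hn : n ≠ 0) (hj : j < m - m % n) :
    airEntry m n j c = if j % n = c then 1 else 0 := by
  rw [airEntry_unfold, if_neg hn]
  by_cases hr : m % n = 0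
  · rw [if_pos hr]
  · rw [if_neg hr, if_pos hj]

lemma airEntry_bot_per {m n j c : ℕ} (hn : n ≠ 0) (hr : m % n ≠ 0)
    (hj : m - m % n ≤ j) (hc : c < n - n % (m % n)) :
    airEntry m n j c = if c % (m % n) = j - (m - m % n) then 1 else 0 := by
  rw [airEntry_unfold, if_neg hn, if_neg hr, if_neg (by omega), if_pos hc]

lemma airEntry_bot_rec {m n j c : ℕ} (hn : n ≠ 0) (hr : m % n ≠ 0)
    (hj : m - m % n ≤ j) (hc : n - n % (m % n) ≤ c) :
    airEntry m n j c = airEntry (m % n) (n % (m % n)) (j - (m - m % n)) (c - (n - n % (m % n))) := by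
  rw [airEntry_unfold, if_neg hn, if_neg hr, if_neg (by omega), if_neg (by omega)]

lemma airEntry_01 : ∀ n m j c, airEntry m n j c = 0 ∨ airEntry m n j c = 1 := by
  intro n
  induction n using Nat.strong_induction_on with
  | _ n ih =>
    intro m j c
    rw [airEntry_unfold]
    by_cases hn : n = 0
    · rw [if_pos hn]; left; rfl
    rw [if_neg hn]
    by_cases hr : m % n = 0
    · rw [if_pos hr]; split <;> simp
    rw [if_neg hr]
    by_cases h1 : j < m - m % n
    · rw [if_pos h1]; split <;> simp
    rw [if_neg h1]
    by_cases h2 : c < n - n % (m % n)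
    · rw [if_pos h2]; split <;> simp
    rw [if_neg h2]
    refine ih _ ?_ _ _ _
    have h3 : m % n < n := Nat.mod_lt _ (Nat.pos_of_ne_zero hn)
    have h4 : n % (m % n) < m % n := Nat.mod_lt _ (Nat.pos_of_ne_zero hr)
    omega

/-- entries vanish off the diagonal mod any common divisor of m and n -/
lemma airEntry_modg (g : ℕ) : ∀ n m j c, g ∣ m → g ∣ n → airEntry m n j c ≠ 0 →
    j % g = c % g := by
  intro n
  induction n using Nat.strong_induction_on with
  | _ n ih =>
    intro m j c hgm hgn hne
    rw [airEntry_unfold] at hne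
    by_cases hn : n = 0
    · rw [if_pos hn] at hne; exact absurd rfl hne
    rw [if_neg hn] at hne
    have hgr : g ∣ m % n := dvd_mod_of_dvd hgm hgn
    have htop : ∀ (h : j % n = c), j % g = c % g := by
      intro h
      have : j % g = (j % n) % g := by
        conv_lhs => rw [← Nat.div_add_mod j n]
        rw [Nat.add_comm, mod_add_dvd _ (Dvd.dvd.mul_right hgn _)]
      rw [this, h]
    by_cases hr : m % n = 0
    · rw [if_pos hr] at hne
      by_cases h : j % n = c
      · exact htop h
      · rw [if_neg h] at hne; exact absurd rfl hne
    rw [if_neg hr] at hne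
    by_cases h1 : j < m - m % n
    · rw [if_pos h1] at hne
      by_cases h : j % n = c
      · exact htop h
      · rw [if_neg h] at hne; exact absurd rfl hne
    have hgmr : g ∣ (m - m % n) := dvd_sub_mod hgm hgn
    have hj' : j % g = (j - (m - m % n)) % g := mod_sub_eq (by omega) hgmr
    rw [if_neg h1] at hne
    by_cases h2 : c < n - n % (m % n)
    · rw [if_pos h2] at hne
      by_cases h : c % (m % n) = j - (m - m % n)
      · have hc' : c % g = (c % (m % n)) % g := by
          conv_lhs => rw [← Nat.div_add_mod c (m % n)]
          rw [Nat.add_comm, mod_add_dvd _ (Dvd.dvd.mul_right hgr _)]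
        rw [hj', hc', h]
      · rw [if_neg h] at hne; exact absurd rfl hne
    rw [if_neg h2] at hne
    have hgs : g ∣ n % (m % n) := dvd_mod_of_dvd hgn hgr
    have hgns : g ∣ (n - n % (m % n)) := Nat.dvd_sub hgn hgs
    have hc' : c % g = (c - (n - n % (m % n))) % g := mod_sub_eq (by omega) hgns
    rw [hj', hc']
    refine ih _ ?_ _ _ _ hgr hgs hne
    have h3 : m % n < n := Nat.mod_lt _ (Nat.pos_of_ne_zero hn)
    have h4 : n % (m % n) < m % n := Nat.mod_lt _ (Nat.pos_of_ne_zero hr)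
    omega

end AirAux

namespace AirAux

/-- integer dot product of row `j` with a weight vector -/
def airDot (m n j : ℕ) (w : ℕ → ℤ) : ℤ :=
  ∑ c ∈ Finset.range n, (airEntry m n j c : ℤ) * w c

lemma airDot_top {m n j : ℕ} (hn : n ≠ 0) (hj : j < m - m % n) (w : ℕ → ℤ) :
    airDot m n j w = w (j % n) := by
  unfold airDot
  rw [Finset.sum_eq_single (j % n)]
  · rw [airEntry_top hn hj, if_pos rfl]; push_cast; ring
  · intro c _ hne
    rw [airEntry_top hn hj, if_neg (fun h => hne h.symm)]
    simp
  · intro h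
    exact absurd (Finset.mem_range.mpr (Nat.mod_lt _ (Nat.pos_of_ne_zero hn))) h

lemma airDot_bot {m n j : ℕ} (hn : n ≠ 0) (hr : m % n ≠ 0) (hj : m - m % n ≤ j) (w : ℕ → ℤ) :
    airDot m n j w =
      (∑ c ∈ Finset.range (n - n % (m % n)),
        (if c % (m % n) = j - (m - m % n) then (1:ℤ) else 0) * w c)
      + ∑ c ∈ Finset.range (n % (m % n)),
        (airEntry (m % n) (n % (m % n)) (j - (m - m % n)) c : ℤ) * w ((n - n % (m % n)) + c) := by
  unfold airDot
  have hle : n - n % (m % n) ≤ n := by omega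
  have hsplit : ∀ f : ℕ → ℤ, ∑ c ∈ Finset.range n, f c
      = (∑ c ∈ Finset.range (n - n % (m % n)), f c)
      + ∑ c ∈ Finset.range (n % (m % n)), f ((n - n % (m % n)) + c) := by
    intro f
    have h2 : ∑ i ∈ Finset.Ico (n - n % (m % n)) n, f i
        = ∑ i ∈ Finset.range (n - (n - n % (m % n))), f ((n - n % (m % n)) + i) :=
      Finset.sum_Ico_eq_sum_range f _ _
    rw [Finset.range_eq_Ico, ← Finset.sum_Ico_consecutive _ (Nat.zero_le _) hle, h2,
      Nat.sub_sub_self (Nat.mod_le n (m % n)), ← Finset.range_eq_Ico]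
  rw [hsplit]
  congr 1
  · apply Finset.sum_congr rfl
    intro c hc
    rw [airEntry_bot_per hn hr hj (Finset.mem_range.mp hc)]
    split <;> simp
  · apply Finset.sum_congr rfl
    intro c hc
    rw [airEntry_bot_rec hn hr hj (by omega)]
    have hcc : (n - n % (m % n)) + c - (n - n % (m % n)) = c := by omega
    rw [hcc]

lemma sum_single_support {N x : ℕ} (a : ℤ) (f : ℕ → ℤ) (hx : x < N) :
    ∑ c ∈ Finset.range N, f c * (if c = x then a else 0) = f x * a := by
  rw [Finset.sum_eq_single x]
  · rw [if_pos rfl]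
  · intro c _ hne; rw [if_neg hne, mul_zero]
  · intro h; exact absurd (Finset.mem_range.mpr hx) h

lemma sum_zero_support {N : ℕ} (f w : ℕ → ℤ) (h : ∀ c, c < N → w c = 0) :
    ∑ c ∈ Finset.range N, f c * w c = 0 := by
  apply Finset.sum_eq_zero
  intro c hc
  rw [h c (Finset.mem_range.mp hc), mul_zero]

/-- periodic sum over a block, with weights supported on the last period -/
lemma per_sum {r pr t : ℕ} (hr : r ≠ 0) (hrpr : r ∣ pr) (hpr : r ≤ pr) (ht : t < r)
    (w : ℕ → ℤ) (hsupp : ∀ c, c < pr - r → w c = 0) :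
    ∑ c ∈ Finset.range pr, (if c % r = t then (1:ℤ) else 0) * w c = w (pr - r + t) := by
  have hdvd : r ∣ pr - r := Nat.dvd_sub hrpr dvd_rfl
  refine (Finset.sum_eq_single (pr - r + t) ?_ ?_).trans ?_
  · intro c hc hne
    by_cases hlt : c < pr - r
    · rw [hsupp c hlt, mul_zero]
    · have hc' := Finset.mem_range.mp hc
      have h1 : c % r = (c - (pr - r)) % r := mod_sub_eq (by omega) hdvd
      have h2 : (c - (pr - r)) % r = c - (pr - r) := Nat.mod_eq_of_lt (by omega)
      rw [if_neg (by omega), zero_mul]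
  · intro h
    exact absurd (Finset.mem_range.mpr (by omega)) h
  · have h3 : (pr - r + t) % r = t := mod_decomp hdvd ht
    rw [h3, if_pos rfl, one_mul]

end AirAux

namespace AirAux

/-- The certificate properties: `w` is orthogonal to the `n-1` following rows and
`gcd-1` preceding rows (cyclically), has dot `1` with row `k`, and satisfies
support bounds needed for the recursion. -/
structure AirGood (m n k : ℕ) (w : ℕ → ℤ) : Prop where
  next : ∀ i, 1 ≤ i → i ≤ n - 1 → airDot m n ((k + i) % m) w = 0
  prev : ∀ i, 1 ≤ i → i ≤ Nat.gcd m n - 1 → airDot m n ((k + (m - i)) % m) w = 0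
  self : airDot m n k w = 1
  bound : ∀ c, n ≤ c → w c = 0
  high : ∀ c, k + 2 ≤ Nat.gcd m n → n - (Nat.gcd m n - 1 - k) ≤ c → w c = 0
  low : ∀ c, c + (m - n) < k → w c = 0

theorem air_good_exists : ∀ n m k : ℕ, 1 ≤ n → n ≤ m → k < m → ∃ w : ℕ → ℤ, AirGood m n k w := by
  intro n
  induction n using Nat.strong_induction_on with
  | _ n ih =>
  intro m k hn hnm hk
  have hn0 : n ≠ 0 := by omega
  have hnpos : 0 < n := by omega
  have hmpos : 0 < m := by omega
  have hxlt : k % n < n := Nat.mod_lt _ hnpos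
  have hgn : Nat.gcd m n ∣ n := Nat.gcd_dvd_right m n
  have hgm : Nat.gcd m n ∣ m := Nat.gcd_dvd_left m n
  have hgle : Nat.gcd m n ≤ n := Nat.le_of_dvd hnpos hgn
  by_cases hr0 : m % n = 0
  · -- CASE A : m is a multiple of n, w = e_{k % n}
    have hnm' : n ∣ m := Nat.dvd_of_mod_eq_zero hr0
    refine ⟨fun c => if c = k % n then 1 else 0, ?_, ?_, ?_, ?_, ?_, ?_⟩
    · intro i h1 h2
      rw [airDot_top hn0 (by have := Nat.mod_lt (k + i) hmpos; omega)]
      have e1 : (k + i) % m % n = (k + i) % n := Nat.mod_mod_of_dvd _ hnm'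
      have e2 : (k + i) % n ≠ (k + 0) % n := modeq_cancel_ne (by omega) (by omega) (by omega)
      have e3 : (k + i) % m % n ≠ k % n := by rw [e1]; simpa using e2
      simp [e3]
    · intro i h1 h2
      rw [airDot_top hn0 (by have := Nat.mod_lt (k + (m - i)) hmpos; omega)]
      have e1 : (k + (m - i)) % m % n = (k + (m - i)) % n := Nat.mod_mod_of_dvd _ hnm'
      have e4 : (k + (m - i)) % n = (k + (n - i)) % n := by
        rw [show k + (m - i) = (k + (n - i)) + (m - n) by omega,
          mod_add_dvd _ (Nat.dvd_sub hnm' dvd_rfl)]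
      have e2 : (k + (n - i)) % n ≠ (k + 0) % n := modeq_cancel_ne (by omega) (by omega) (by omega)
      have e3 : (k + (m - i)) % m % n ≠ k % n := by rw [e1, e4]; simpa using e2
      simp [e3]
    · rw [airDot_top hn0 (by omega)]
      simp
    · intro c hc; simp [show c ≠ k % n by omega]
    · intro c h1 h2
      have hkn : k % n = k := Nat.mod_eq_of_lt (by omega)
      simp [show c ≠ k % n by omega]
    · intro c h1
      have hlow : k ≤ k % n + (m - n) := by
        have h1 := Nat.div_add_mod k n
        have h2 := Nat.div_add_mod m n
        have h3 : k / n < m / n := by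
          rw [Nat.div_lt_iff_lt_mul hnpos]
          calc k < m - m % n := by omega
            _ ≤ m / n * n := by rw [Nat.mul_comm]; omega
        have h4 : n * (k / n) + n ≤ n * (m / n) := by
          calc n * (k / n) + n = n * (k / n + 1) := by ring
            _ ≤ n * (m / n) := Nat.mul_le_mul_left n h3
        omega
      simp [show c ≠ k % n by omega]
  · -- r := m % n > 0
    have hrn : m % n < n := Nat.mod_lt _ hnpos
    have hrpos : 0 < m % n := by omega
    have hmrdvd : n ∣ (m - m % n) := n_dvd_sub_mod m n
    have hmrn : n ≤ m - m % n := Nat.le_of_dvd (by omega) hmrdvd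
    have hgr : Nat.gcd m n ∣ m % n := dvd_mod_of_dvd hgm hgn
    have hgler : Nat.gcd m n ≤ m % n := Nat.le_of_dvd hrpos hgr
    have hsr : n % (m % n) < m % n := Nat.mod_lt _ hrpos
    have hprdvd : (m % n) ∣ (n - n % (m % n)) := n_dvd_sub_mod n (m % n)
    have hprpos : 0 < n - n % (m % n) := by omega
    have hrlepr : m % n ≤ n - n % (m % n) := Nat.le_of_dvd hprpos hprdvd
    by_cases htop : k < m - m % n
    · -- top rows
      by_cases hB : k % n < m % n ∨ k + n ≤ m - m % n
      · -- CASE B : w = e_{k % n}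
        have hbot : k % n < m % n → ∀ t, t < m % n → t ≠ k % n →
            airDot m n (m - m % n + t) (fun c => if c = k % n then (1:ℤ) else 0) = 0 := by
          intro hxr t ht htne
          rw [airDot_bot hn0 hr0 (by omega)]
          have hsub : m - m % n + t - (m - m % n) = t := by omega
          rw [hsub]
          have hP : ∑ c ∈ Finset.range (n - n % (m % n)),
              (if c % (m % n) = t then (1:ℤ) else 0) *
                (fun c => if c = k % n then (1:ℤ) else 0) c = 0 := by
            simp only []
            rw [sum_single_support 1 _ (by omega : k % n < n - n % (m % n))]
            rw [Nat.mod_eq_of_lt (by omega : k % n < m % n)]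
            simp [Ne.symm htne]
          have hL : ∑ c ∈ Finset.range (n % (m % n)),
              (airEntry (m % n) (n % (m % n)) (m - m % n + t - (m - m % n)) c : ℤ) *
                (fun c => if c = k % n then (1:ℤ) else 0) (n - n % (m % n) + c) = 0 := by
            apply Finset.sum_eq_zero
            intro c hc
            simp only []
            rw [if_neg (by omega), mul_zero]
          rw [hsub] at hL
          rw [hP, hL, add_zero]
        refine ⟨fun c => if c = k % n then 1 else 0, ?_, ?_, ?_, ?_, ?_, ?_⟩
        · intro i h1 h2
          by_cases hz1 : k + i < m - m % n
          · rw [Nat.mod_eq_of_lt (by omega), airDot_top hn0 hz1]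
            have e2 : (k + i) % n ≠ (k + 0) % n := modeq_cancel_ne (by omega) (by omega) (by omega)
            have e3 : (k + i) % n ≠ k % n := by simpa using e2
            simp [e3]
          · have hxr : k % n < m % n := hB.resolve_right (by omega)
            by_cases hz2 : k + i < m
            · rw [Nat.mod_eq_of_lt hz2]
              have ht : k + i - (m - m % n) < m % n := by omega
              have htval : (k + i) % n = k + i - (m - m % n) := by
                conv_lhs => rw [show k + i = (m - m % n) + (k + i - (m - m % n)) by omega]
                rw [mod_decomp hmrdvd (by omega)]
              have e2 : (k + i) % n ≠ (k + 0) % n := modeq_cancel_ne (by omega) (by omega) (by omega)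
              have htne : k + i - (m - m % n) ≠ k % n := by rw [← htval]; simpa using e2
              have := hbot hxr (k + i - (m - m % n)) ht htne
              rw [show m - m % n + (k + i - (m - m % n)) = k + i by omega] at this
              exact this
            · -- wrapped to top
              have hρ : (k + i) % m = k + i - m := mod_between (by omega) (by omega)
              rw [hρ, airDot_top hn0 (by omega)]
              have hkA1' : m - m % n - n < k := by omega
              have hxval' : k % n = k - (m - m % n - n) := by
                conv_lhs => rw [show k = (m - m % n - n) + (k - (m - m % n - n)) by omega]
                rw [mod_decomp (Nat.dvd_sub hmrdvd dvd_rfl) (by omega)]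
              have hρn : (k + i - m) % n = k + i - m := Nat.mod_eq_of_lt (by omega)
              rw [hρn]
              simp [show k + i - m ≠ k % n by omega]
        · intro i h1 h2
          by_cases hz1 : i ≤ k
          · rw [show k + (m - i) = (k - i) + m by omega, Nat.add_mod_right,
              Nat.mod_eq_of_lt (by omega), airDot_top hn0 (by omega)]
            have e2 : ((k - i) + 0) % n ≠ ((k - i) + i) % n :=
              modeq_cancel_ne (by omega) (by omega) (by omega)
            have e3 : (k - i) % n ≠ k % n := by
              simpa [show k - i + i = k by omega] using e2
            simp [e3]
          · have hxk : k % n = k := Nat.mod_eq_of_lt (by omega)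
            have hxr : k % n < m % n := by omega
            rw [Nat.mod_eq_of_lt (by omega : k + (m - i) < m)]
            have ht : k + (m - i) - (m - m % n) < m % n := by omega
            have := hbot hxr (k + (m - i) - (m - m % n)) ht (by omega)
            rw [show m - m % n + (k + (m - i) - (m - m % n)) = k + (m - i) by omega] at this
            exact this
        · rw [airDot_top hn0 htop]; simp
        · intro c hc; simp [show c ≠ k % n by omega]
        · intro c h1 h2
          have hkn : k % n = k := Nat.mod_eq_of_lt (by omega)
          simp [show c ≠ k % n by omega]
        · intro c h1
          have hlow : k ≤ k % n + (m - n) := by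
            have hh1 := Nat.div_add_mod k n
            have hh2 := Nat.div_add_mod m n
            have h3 : k / n < m / n := by
              rw [Nat.div_lt_iff_lt_mul hnpos]
              calc k < m - m % n := by omega
                _ ≤ m / n * n := by rw [Nat.mul_comm]; omega
            have h4 : n * (k / n) + n ≤ n * (m / n) := by
              calc n * (k / n) + n = n * (k / n + 1) := by ring
                _ ≤ n * (m / n) := Nat.mul_le_mul_left n h3
            omega
          simp [show c ≠ k % n by omega]
      · -- top-high rows with k % n ≥ m % n
        push_neg at hB
        obtain ⟨hxr, hkh⟩ := hB
        have hAdvd : n ∣ (m - m % n - n) := Nat.dvd_sub hmrdvd dvd_rfl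
        have hkA1 : m - m % n - n < k := by omega
        have hkA : k - (m - m % n - n) < n := by omega
        have hxval : k % n = k - (m - m % n - n) := by
          conv_lhs => rw [show k = (m - m % n - n) + (k - (m - m % n - n)) by omega]
          rw [mod_decomp hAdvd hkA]
        by_cases hxpr : k % n < n - n % (m % n)
        · -- CASE C : w = e_x - e_{x - r}
          have hbotall : ∀ t, t < m % n → airDot m n (m - m % n + t)
              (fun c => if c = k % n then (1:ℤ) else if c = k % n - m % n then -1 else 0) = 0 := by
            intro t ht
            rw [airDot_bot hn0 hr0 (by omega)]
            have hsub : m - m % n + t - (m - m % n) = t := by omega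
            rw [hsub]
            have hsplit : ∀ c : ℕ, (if c = k % n then (1:ℤ) else if c = k % n - m % n then -1 else 0)
                = (if c = k % n then (1:ℤ) else 0) + (if c = k % n - m % n then (-1:ℤ) else 0) := by
              intro c
              by_cases hc1 : c = k % n
              · rw [if_pos hc1, if_pos hc1, if_neg (by omega), add_zero]
              · rw [if_neg hc1, if_neg hc1, zero_add]
            have hP : ∑ c ∈ Finset.range (n - n % (m % n)),
                (if c % (m % n) = t then (1:ℤ) else 0) *
                  (fun c => if c = k % n then (1:ℤ) else if c = k % n - m % n then -1 else 0) c
                  = 0 := by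
              simp only []
              calc ∑ c ∈ Finset.range (n - n % (m % n)), (if c % (m % n) = t then (1:ℤ) else 0) *
                    (if c = k % n then (1:ℤ) else if c = k % n - m % n then -1 else 0)
                  = ∑ c ∈ Finset.range (n - n % (m % n)), ((if c % (m % n) = t then (1:ℤ) else 0) *
                    (if c = k % n then (1:ℤ) else 0) + (if c % (m % n) = t then (1:ℤ) else 0) *
                    (if c = k % n - m % n then (-1:ℤ) else 0)) := by
                    apply Finset.sum_congr rfl
                    intro c _
                    rw [hsplit c, mul_add]
                _ = (∑ c ∈ Finset.range (n - n % (m % n)), (if c % (m % n) = t then (1:ℤ) else 0) *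
                    (if c = k % n then (1:ℤ) else 0)) + ∑ c ∈ Finset.range (n - n % (m % n)),
                    (if c % (m % n) = t then (1:ℤ) else 0) *
                    (if c = k % n - m % n then (-1:ℤ) else 0) :=
                    Finset.sum_add_distrib
                _ = 0 := by
                    rw [sum_single_support 1 _ (by omega : k % n < n - n % (m % n)),
                      sum_single_support (-1) _ (by omega : k % n - m % n < n - n % (m % n))]
                    have hmm : (k % n) % (m % n) = (k % n - m % n) % (m % n) := by
                      conv_lhs => rw [show k % n = (k % n - m % n) + m % n by omega]
                      rw [Nat.add_mod_right]
                    rw [hmm]; ring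
            have hL : ∑ c ∈ Finset.range (n % (m % n)),
                (airEntry (m % n) (n % (m % n)) t c : ℤ) *
                  (fun c => if c = k % n then (1:ℤ) else if c = k % n - m % n then -1 else 0)
                    (n - n % (m % n) + c) = 0 := by
              apply Finset.sum_eq_zero
              intro c hc
              simp only []
              rw [if_neg (by omega), if_neg (by omega), mul_zero]
            rw [hP, hL, add_zero]
          refine ⟨fun c => if c = k % n then (1:ℤ) else if c = k % n - m % n then -1 else 0,
            ?_, ?_, ?_, ?_, ?_, ?_⟩
          · intro i h1 h2
            by_cases hz1 : k + i < m - m % n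
            · rw [Nat.mod_eq_of_lt (by omega), airDot_top hn0 hz1]
              have hv : (k + i) % n = k % n + i := by
                conv_lhs => rw [show k + i = (m - m % n - n) + (k % n + i) by omega]
                rw [mod_decomp hAdvd (by omega)]
              rw [hv]
              rw [if_neg (by omega), if_neg (by omega)]
            · by_cases hz2 : k + i < m
              · rw [Nat.mod_eq_of_lt hz2]
                have := hbotall (k + i - (m - m % n)) (by omega)
                rw [show m - m % n + (k + i - (m - m % n)) = k + i by omega] at this
                exact this
              · have hρ : (k + i) % m = k + i - m := mod_between (by omega) (by omega)
                rw [hρ, airDot_top hn0 (by omega)]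
                rw [Nat.mod_eq_of_lt (by omega : k + i - m < n)]
                rw [if_neg (by omega), if_neg (by omega)]
          · intro i h1 h2
            have hik : i ≤ k := by omega
            rw [show k + (m - i) = (k - i) + m by omega, Nat.add_mod_right,
              Nat.mod_eq_of_lt (by omega), airDot_top hn0 (by omega)]
            have hv : (k - i) % n = k % n - i := by
              conv_lhs => rw [show k - i = (m - m % n - n) + (k % n - i) by omega]
              rw [mod_decomp hAdvd (by omega)]
            rw [hv]
            rw [if_neg (by omega), if_neg (by omega)]
          · rw [airDot_top hn0 htop]
            simp
          · intro c hc
            rw [if_neg (by omega), if_neg (by omega)]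
          · intro c hcg hcc
            exact absurd hcg (by omega)
          · intro c h1
            rw [if_neg (by omega), if_neg (by omega)]
        · -- CASE D : w = e_x - (last identity block weighted by column d of AIR(r,s))
          have hspos : 0 < n % (m % n) := by omega
          have hs0' : n % (m % n) ≠ 0 := by omega
          have hd : k % n - (n - n % (m % n)) < n % (m % n) := by omega
          have hgs : Nat.gcd m n ∣ n % (m % n) := dvd_mod_of_dvd hgn hgr
          have hssdvd : (n % (m % n)) ∣ (m % n - (m % n) % (n % (m % n))) :=
            n_dvd_sub_mod (m % n) (n % (m % n))
          have hss1 : (m % n) % (n % (m % n)) < n % (m % n) := Nat.mod_lt _ hspos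
          have hssle : n % (m % n) ≤ m % n - (m % n) % (n % (m % n)) :=
            Nat.le_of_dvd (by omega) hssdvd
          have hL0 : ∀ t, t < k % n - (n - n % (m % n)) →
              airEntry (m % n) (n % (m % n)) t (k % n - (n - n % (m % n))) = 0 := by
            intro t ht
            rw [airEntry_top hs0' (by omega), Nat.mod_eq_of_lt (by omega), if_neg (by omega)]
          have hLg : ∀ i, 1 ≤ i → i ≤ Nat.gcd m n - 1 → k % n - (n - n % (m % n)) < i →
              airEntry (m % n) (n % (m % n))
                (m % n - (i - (k % n - (n - n % (m % n))))) (k % n - (n - n % (m % n))) = 0 := by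
            intro i hi1 hi2 hdi
            by_contra hne
            have hmg := airEntry_modg (Nat.gcd m n) (n % (m % n)) (m % n) _ _ hgr hgs hne
            have hdg : (k % n - (n - n % (m % n))) % Nat.gcd m n = k % n - (n - n % (m % n)) :=
              Nat.mod_eq_of_lt (by omega)
            have htg : (m % n - (i - (k % n - (n - n % (m % n))))) % Nat.gcd m n
                = Nat.gcd m n - (i - (k % n - (n - n % (m % n)))) := by
              conv_lhs => rw [show m % n - (i - (k % n - (n - n % (m % n))))
                = (m % n - Nat.gcd m n) + (Nat.gcd m n - (i - (k % n - (n - n % (m % n))))) by omega]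
              rw [mod_decomp (Nat.dvd_sub hgr dvd_rfl) (by omega)]
            rw [htg, hdg] at hmg
            omega
          have hbotall : ∀ t, t < m % n → airDot m n (m - m % n + t)
              (fun c => if c = k % n then (1:ℤ)
                else if k % n - m % n ≤ c ∧ c < n - n % (m % n)
                then -(airEntry (m % n) (n % (m % n))
                  (c - (n - n % (m % n) - m % n)) (k % n - (n - n % (m % n))) : ℤ)
                else 0) = 0 := by
            intro t ht
            rw [airDot_bot hn0 hr0 (by omega)]
            have hsub : m - m % n + t - (m - m % n) = t := by omega
            rw [hsub]
            rw [per_sum (by omega) hprdvd hrlepr ht _ (by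
              intro c hcl
              rw [if_neg (by omega), if_neg (by omega)])]
            have hwL : ∑ c ∈ Finset.range (n % (m % n)),
                (airEntry (m % n) (n % (m % n)) t c : ℤ) *
                  (if n - n % (m % n) + c = k % n then (1:ℤ)
                    else if k % n - m % n ≤ n - n % (m % n) + c ∧
                        n - n % (m % n) + c < n - n % (m % n)
                    then -(airEntry (m % n) (n % (m % n))
                      (n - n % (m % n) + c - (n - n % (m % n) - m % n))
                      (k % n - (n - n % (m % n))) : ℤ)
                    else 0)
                = (airEntry (m % n) (n % (m % n)) t (k % n - (n - n % (m % n))) : ℤ) := by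
              calc ∑ c ∈ Finset.range (n % (m % n)),
                  (airEntry (m % n) (n % (m % n)) t c : ℤ) *
                    (if n - n % (m % n) + c = k % n then (1:ℤ)
                      else if k % n - m % n ≤ n - n % (m % n) + c ∧
                          n - n % (m % n) + c < n - n % (m % n)
                      then -(airEntry (m % n) (n % (m % n))
                        (n - n % (m % n) + c - (n - n % (m % n) - m % n))
                        (k % n - (n - n % (m % n))) : ℤ)
                      else 0)
                  = ∑ c ∈ Finset.range (n % (m % n)),
                    (airEntry (m % n) (n % (m % n)) t c : ℤ) *
                      (if c = k % n - (n - n % (m % n)) then (1:ℤ) else 0) := by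
                    apply Finset.sum_congr rfl
                    intro c hc
                    congr 1
                    have hcc : (n - n % (m % n) + c = k % n) ↔
                        (c = k % n - (n - n % (m % n))) := by omega
                    by_cases hcd : c = k % n - (n - n % (m % n))
                    · rw [if_pos (hcc.mpr hcd), if_pos hcd]
                    · rw [if_neg (fun h => hcd (hcc.mp h)), if_neg (by omega), if_neg hcd]
                _ = _ := by
                    rw [sum_single_support 1 _ hd, mul_one]
            by_cases hdt : k % n - (n - n % (m % n)) ≤ t
            · rw [if_neg (by omega), if_pos (by omega),
                show n - n % (m % n) - m % n + t - (n - n % (m % n) - m % n) = t by omega,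
                hwL]
              ring
            · rw [if_neg (by omega), if_neg (by omega), zero_add, hwL,
                hL0 t (by omega)]
              simp
          refine ⟨fun c => if c = k % n then (1:ℤ)
            else if k % n - m % n ≤ c ∧ c < n - n % (m % n)
            then -(airEntry (m % n) (n % (m % n))
              (c - (n - n % (m % n) - m % n)) (k % n - (n - n % (m % n))) : ℤ)
            else 0, ?_, ?_, ?_, ?_, ?_, ?_⟩
          · intro i h1 h2
            by_cases hz1 : k + i < m - m % n
            · rw [Nat.mod_eq_of_lt (by omega), airDot_top hn0 hz1]
              have hv : (k + i) % n = k % n + i := by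
                conv_lhs => rw [show k + i = (m - m % n - n) + (k % n + i) by omega]
                rw [mod_decomp hAdvd (by omega)]
              rw [hv, if_neg (by omega), if_neg (by omega)]
            · by_cases hz2 : k + i < m
              · rw [Nat.mod_eq_of_lt hz2]
                have := hbotall (k + i - (m - m % n)) (by omega)
                rw [show m - m % n + (k + i - (m - m % n)) = k + i by omega] at this
                exact this
              · have hρ : (k + i) % m = k + i - m := mod_between (by omega) (by omega)
                rw [hρ, airDot_top hn0 (by omega),
                  Nat.mod_eq_of_lt (by omega : k + i - m < n),
                  if_neg (by omega), if_neg (by omega)]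
          · intro i h1 h2
            have hik : i ≤ k := by omega
            rw [show k + (m - i) = (k - i) + m by omega, Nat.add_mod_right,
              Nat.mod_eq_of_lt (by omega), airDot_top hn0 (by omega)]
            have hv : (k - i) % n = k % n - i := by
              conv_lhs => rw [show k - i = (m - m % n - n) + (k % n - i) by omega]
              rw [mod_decomp hAdvd (by omega)]
            rw [hv]
            by_cases hid : i ≤ k % n - (n - n % (m % n))
            · rw [if_neg (by omega), if_neg (by omega)]
            · rw [if_neg (by omega), if_pos (by omega),
                show k % n - i - (n - n % (m % n) - m % n)
                  = m % n - (i - (k % n - (n - n % (m % n)))) by omega,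
                hLg i h1 h2 (by omega)]
              simp
          · rw [airDot_top hn0 htop]
            simp
          · intro c hc
            rw [if_neg (by omega), if_neg (by omega)]
          · intro c hcg hcc
            exact absurd hcg (by omega)
          · intro c h1
            rw [if_neg (by omega), if_neg (by omega)]
    · -- bottom rows, u := k - (m - m % n)
      have hu : k - (m - m % n) < m % n := by omega
      by_cases hs0 : n % (m % n) = 0
      · -- CASE E : w = e_{n - r + u}
        have hrdvdn : (m % n) ∣ n := Nat.dvd_of_mod_eq_zero hs0
        have hrdvdmr : (m % n) ∣ (m - m % n) := dvd_trans hrdvdn hmrdvd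
        have hrdvdm : (m % n) ∣ m := by
          have hsum : m - m % n + m % n = m := Nat.sub_add_cancel (Nat.mod_le m n)
          have hd2 : (m % n) ∣ (m - m % n + m % n) := dvd_add hrdvdmr dvd_rfl
          rwa [hsum] at hd2
        have hgeq : Nat.gcd m n = m % n := Nat.dvd_antisymm hgr (Nat.dvd_gcd hrdvdm hrdvdn)
        have hcol : (n - m % n + (k - (m - m % n))) % (m % n) = k - (m - m % n) :=
          mod_decomp (Nat.dvd_sub hrdvdn dvd_rfl) hu
        have hAdvd2 : n ∣ (m - m % n - n) := Nat.dvd_sub hmrdvd dvd_rfl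
        have hbot : ∀ t, t < m % n → airDot m n (m - m % n + t)
            (fun c => if c = n - m % n + (k - (m - m % n)) then (1:ℤ) else 0)
            = (if k - (m - m % n) = t then (1:ℤ) else 0) := by
          intro t ht
          rw [airDot_bot hn0 hr0 (by omega), hs0,
            show m - m % n + t - (m - m % n) = t by omega,
            Finset.range_zero, Finset.sum_empty, add_zero, Nat.sub_zero,
            sum_single_support 1 _ (by omega : n - m % n + (k - (m - m % n)) < n),
            hcol, mul_one]
        refine ⟨fun c => if c = n - m % n + (k - (m - m % n)) then (1:ℤ) else 0,
          ?_, ?_, ?_, ?_, ?_, ?_⟩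
        · intro i h1 h2
          by_cases hz2 : k + i < m
          · rw [Nat.mod_eq_of_lt hz2]
            have hb := hbot (k + i - (m - m % n)) (by omega)
            rw [show m - m % n + (k + i - (m - m % n)) = k + i by omega] at hb
            rw [hb, if_neg (by omega)]
          · rw [mod_between (by omega) (by omega), airDot_top hn0 (by omega),
              Nat.mod_eq_of_lt (by omega : k + i - m < n), if_neg (by omega)]
        · intro i h1 h2
          rw [hgeq] at h2
          by_cases hzb : i ≤ k - (m - m % n)
          · rw [show k + (m - i) = (k - i) + m by omega, Nat.add_mod_right,
              Nat.mod_eq_of_lt (by omega)]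
            have hb := hbot (k - (m - m % n) - i) (by omega)
            rw [show m - m % n + (k - (m - m % n) - i) = k - i by omega] at hb
            rw [hb, if_neg (by omega)]
          · rw [show k + (m - i) = (k - i) + m by omega, Nat.add_mod_right,
              Nat.mod_eq_of_lt (by omega), airDot_top hn0 (by omega)]
            have hv : (k - i) % n = n - (i - (k - (m - m % n))) := by
              conv_lhs => rw [show k - i
                = (m - m % n - n) + (n - (i - (k - (m - m % n)))) by omega]
              rw [mod_decomp hAdvd2 (by omega)]
            rw [hv, if_neg (by omega)]
        · have hb := hbot (k - (m - m % n)) hu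
          rw [show m - m % n + (k - (m - m % n)) = k by omega] at hb
          rw [hb, if_pos rfl]
        · intro c hc
          rw [if_neg (by omega)]
        · intro c hcg hcc
          exact absurd hcg (by omega)
        · intro c h1
          rw [if_neg (by omega)]
      · -- CASE F : recursive case
        have hspos : 0 < n % (m % n) := by omega
        have hslt : n % (m % n) < n := by omega
        obtain ⟨w', hw'⟩ := ih (n % (m % n)) hslt (m % n) (k - (m - m % n))
          (by omega) (by omega) hu
        have hgeq : Nat.gcd m n = Nat.gcd (m % n) (n % (m % n)) := by
          rw [Nat.gcd_comm m n, Nat.gcd_rec n m, Nat.gcd_rec (m % n) n,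
            Nat.gcd_comm (n % (m % n)) (m % n)]
        have hgles : Nat.gcd m n ≤ n % (m % n) := by
          rw [hgeq]
          exact Nat.le_of_dvd hspos (Nat.gcd_dvd_right _ _)
        have hAdvd2 : n ∣ (m - m % n - n) := Nat.dvd_sub hmrdvd dvd_rfl
        have hlow_w : ∀ c, c < n - m % n + (k - (m - m % n)) →
            (fun c => if n - n % (m % n) ≤ c then w' (c - (n - n % (m % n)))
              else if n - m % n + (k - (m - m % n)) ≤ c
              then -(airDot (m % n) (n % (m % n)) (c - (n - n % (m % n) - m % n)) w')
              else 0) c = 0 := by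
          intro c hc
          simp only []
          by_cases hc1 : n - n % (m % n) ≤ c
          · rw [if_pos hc1]
            exact hw'.low _ (by omega)
          · rw [if_neg hc1, if_neg (by omega)]
        have hbot : ∀ t, t < m % n → airDot m n (m - m % n + t)
            (fun c => if n - n % (m % n) ≤ c then w' (c - (n - n % (m % n)))
              else if n - m % n + (k - (m - m % n)) ≤ c
              then -(airDot (m % n) (n % (m % n)) (c - (n - n % (m % n) - m % n)) w')
              else 0)
            = (if n % (m % n) + (k - (m - m % n)) ≤ t
                then -(airDot (m % n) (n % (m % n)) t w') else 0)
              + airDot (m % n) (n % (m % n)) t w' := by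
          intro t ht
          rw [airDot_bot hn0 hr0 (by omega), show m - m % n + t - (m - m % n) = t by omega]
          congr 1
          · rw [per_sum (by omega) hprdvd hrlepr ht _ (fun c hc => by
              rw [if_neg (by omega), if_neg (by omega)])]
            by_cases hst : n % (m % n) + (k - (m - m % n)) ≤ t
            · rw [if_neg (by omega), if_pos (by omega),
                show n - n % (m % n) - m % n + t - (n - n % (m % n) - m % n) = t by omega,
                if_pos hst]
            · rw [if_neg (by omega), if_neg (by omega), if_neg hst]
          · unfold airDot
            apply Finset.sum_congr rfl
            intro c hc
            congr 1
            rw [if_pos (by omega), show n - n % (m % n) + c - (n - n % (m % n)) = c by omega]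
        refine ⟨fun c => if n - n % (m % n) ≤ c then w' (c - (n - n % (m % n)))
          else if n - m % n + (k - (m - m % n)) ≤ c
          then -(airDot (m % n) (n % (m % n)) (c - (n - n % (m % n) - m % n)) w')
          else 0, ?_, ?_, ?_, ?_, ?_, ?_⟩
        · intro i h1 h2
          by_cases hz2 : k + i < m
          · rw [Nat.mod_eq_of_lt hz2]
            have hb := hbot (k + i - (m - m % n)) (by omega)
            rw [show m - m % n + (k + i - (m - m % n)) = k + i by omega] at hb
            rw [hb]
            by_cases his : n % (m % n) + (k - (m - m % n)) ≤ k + i - (m - m % n)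
            · rw [if_pos his]; ring
            · rw [if_neg his, zero_add]
              have hnx := hw'.next i h1 (by omega)
              rw [Nat.mod_eq_of_lt (by omega : (k - (m - m % n)) + i < m % n)] at hnx
              rw [show k + i - (m - m % n) = k - (m - m % n) + i by omega]
              exact hnx
          · rw [mod_between (by omega) (by omega), airDot_top hn0 (by omega),
              Nat.mod_eq_of_lt (by omega : k + i - m < n)]
            exact hlow_w _ (by omega)
        · intro i h1 h2
          by_cases hzb : i ≤ k - (m - m % n)
          · rw [show k + (m - i) = (k - i) + m by omega, Nat.add_mod_right,
              Nat.mod_eq_of_lt (by omega)]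
            have hb := hbot (k - (m - m % n) - i) (by omega)
            rw [show m - m % n + (k - (m - m % n) - i) = k - i by omega] at hb
            rw [hb, if_neg (by omega), zero_add]
            have hpv := hw'.prev i h1 (by rw [← hgeq]; exact h2)
            rw [show (k - (m - m % n)) + (m % n - i) = (k - (m - m % n) - i) + m % n by omega,
              Nat.add_mod_right,
              Nat.mod_eq_of_lt (show k - (m - m % n) - i < m % n by omega)] at hpv
            exact hpv
          · rw [show k + (m - i) = (k - i) + m by omega, Nat.add_mod_right,
              Nat.mod_eq_of_lt (by omega), airDot_top hn0 (by omega)]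
            have hv : (k - i) % n = n - (i - (k - (m - m % n))) := by
              conv_lhs => rw [show k - i
                = (m - m % n - n) + (n - (i - (k - (m - m % n)))) by omega]
              rw [mod_decomp hAdvd2 (by omega)]
            rw [hv, if_pos (by omega)]
            exact hw'.high _ (by rw [← hgeq]; omega) (by rw [← hgeq]; omega)
        · have hb := hbot (k - (m - m % n)) hu
          rw [show m - m % n + (k - (m - m % n)) = k by omega] at hb
          rw [hb, if_neg (by omega), zero_add]
          exact hw'.self
        · intro c hc
          rw [if_pos (by omega)]
          exact hw'.bound _ (by omega)
        · intro c hcg hcc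
          exact absurd hcg (by omega)
        · intro c h1
          exact hlow_w _ (by omega)

end AirAux

open AirAux in
/-- Adjacent-row independence of the AIR matrix: in the `m × n` AIR matrix
(over any field `F`), every row `L_k` is outside the `F`-linear span of the `n - 1` rows
following it and the `gcd(m,n) - 1` rows preceding it (row indices modulo `m`). -/
theorem air_adjacent_rows_independent (F : Type*) [Field F] (m n : ℕ)
    (hn : 1 ≤ n) (hnm : n ≤ m) :
    ∀ k : Fin m, airRow F m n (k : ℕ) ∉ Submodule.span F
      { v : Fin n → F | ∃ j : Fin m,
          ((∃ r : ℕ, 1 ≤ r ∧ r ≤ n - 1 ∧ ((k : ℕ) + r) % m = (j : ℕ)) ∨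
           (∃ r : ℕ, 1 ≤ r ∧ r ≤ Nat.gcd m n - 1 ∧ ((j : ℕ) + r) % m = (k : ℕ))) ∧
          v = airRow F m n (j : ℕ) } := by
  intro k hmem
  obtain ⟨w, hw⟩ := air_good_exists n m (k : ℕ) hn hnm k.isLt
  classical
  have hgle : Nat.gcd m n ≤ n := Nat.le_of_dvd (by omega) (Nat.gcd_dvd_right m n)
  let φ : (Fin n → F) →ₗ[F] F :=
    { toFun := fun v => ∑ i : Fin n, v i * ((w (i : ℕ) : ℤ) : F)
      map_add' := by
        intro a b
        simp [add_mul, Finset.sum_add_distrib]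
      map_smul' := by
        intro a b
        simp [Finset.mul_sum, mul_assoc] }
  have hrow : ∀ j : ℕ, (∑ i : Fin n, airRow F m n j i * ((w (i : ℕ) : ℤ) : F))
      = ((airDot m n j w : ℤ) : F) := by
    intro j
    unfold airDot
    rw [← Fin.sum_univ_eq_sum_range (fun c => (airEntry m n j c : ℤ) * w c) n]
    push_cast
    apply Finset.sum_congr rfl
    intro c _
    unfold airRow
    rcases airEntry_01 n m j c with h | h <;> rw [h] <;> norm_num
  have hS : Submodule.span F
      { v : Fin n → F | ∃ j : Fin m,
          ((∃ r : ℕ, 1 ≤ r ∧ r ≤ n - 1 ∧ ((k : ℕ) + r) % m = (j : ℕ)) ∨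
           (∃ r : ℕ, 1 ≤ r ∧ r ≤ Nat.gcd m n - 1 ∧ ((j : ℕ) + r) % m = (k : ℕ))) ∧
          v = airRow F m n (j : ℕ) } ≤ LinearMap.ker φ := by
    rw [Submodule.span_le]
    rintro v ⟨j, hj, rfl⟩
    simp only [SetLike.mem_coe, LinearMap.mem_ker]
    show (∑ i : Fin n, airRow F m n (j : ℕ) i * ((w (i : ℕ) : ℤ) : F)) = 0
    rw [hrow]
    rcases hj with ⟨r, hr1, hr2, hr3⟩ | ⟨r, hr1, hr2, hr3⟩
    · have hd := hw.next r hr1 hr2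
      rw [hr3] at hd
      rw [hd]
      norm_num
    · have hjm : (j : ℕ) < m := j.isLt
      have hkm : (k : ℕ) < m := k.isLt
      have hrm : r < m := by omega
      have hj' : ((k : ℕ) + (m - r)) % m = (j : ℕ) := by
        rcases Nat.lt_or_ge ((j : ℕ) + r) m with hlt | hge
        · rw [Nat.mod_eq_of_lt hlt] at hr3
          rw [show (k : ℕ) + (m - r) = (j : ℕ) + m by omega, Nat.add_mod_right,
            Nat.mod_eq_of_lt hjm]
        · have hbt : ((j : ℕ) + r) % m = (j : ℕ) + r - m := mod_between hge (by omega)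
          rw [hbt] at hr3
          rw [show (k : ℕ) + (m - r) = (j : ℕ) by omega, Nat.mod_eq_of_lt hjm]
      have hd := hw.prev r hr1 hr2
      rw [hj'] at hd
      rw [hd]
      norm_num
  have h0 : φ (airRow F m n (k : ℕ)) = 0 := hS hmem
  have h1 : φ (airRow F m n (k : ℕ)) = 1 := by
    show (∑ i : Fin n, airRow F m n (k : ℕ) i * ((w (i : ℕ) : ℤ) : F)) = 1
    rw [hrow, hw.self]
    norm_num
  rw [h0] at h1
  exact zero_ne_one h1
end

section
/- Let K, D, U be integers with 0 ≤ U ≤ D and U + D < K, and let (a,b) ∈ S_{K,D,U}, i.e., a ≥ 0, b ≥ 1 and gcd(bK, b(D+1)+a) ≥ b(U+1). Set m = Kb and n = b(D+1)+a, and let F be any field. Then the AIR matrix L of size m × n, viewed over F and with rows L_0,…,L_{m−1}, satisfies: for every j ∈ {0,…,Kb−1}, writing t = ⌊j/b⌋, the row L_j does not lie in the F-linear span of the rows {L_{j'} : j' ≠ j, (t−U)b ≤ j' ≤ (t+D+1)b − 1} with row indices taken modulo Kb. Consequently L is a valid b-dimensional vector linear encoding matrix of length b(D+1)+a for the (K,D,U)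 SUICP-SNI over every field, achieving the rate D + 1 + a/b broadcast symbols per message symbol. -/
set_option linter.unusedVariables false
set_option maxHeartbeats 1000000

lemma airEntry_def (m n j k : ℕ) : airEntry m n j k =
    if n = 0 then 0
    else if m % n = 0 then (if j % n = k then 1 else 0)
    else if j < m - m % n then (if j % n = k then 1 else 0)
    else if k < n - n % (m % n) then (if k % (m % n) = j - (m - m % n) then 1 else 0)
    else airEntry (m % n) (n % (m % n)) (j - (m - m % n)) (k - (n - n % (m % n))) := by
  conv_lhs => rw [airEntry]
  simp only [dite_eq_ite]

lemma airEntry_le_one (m n j k : ℕ) : airEntry m n j k ≤ 1 := by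
  induction n using Nat.strong_induction_on generalizing m j k with
  | _ n ih =>
    rw [airEntry_def]
    split
    · omega
    · rename_i hn
      split
      · split <;> omega
      · rename_i hr
        split
        · split <;> omega
        · split
          · split <;> omega
          · exact ih _ (by
              have h1 : m % n < n := Nat.mod_lt _ (Nat.pos_of_ne_zero hn)
              have h2 : n % (m % n) < m % n := Nat.mod_lt _ (Nat.pos_of_ne_zero hr)
              omega) _ _ _

/-- Top rows of a tall AIR matrix are unit rows. -/
lemma air_top {m n j : ℕ} (hnm : n ≤ m) (hj : j < n) (k : ℕ) :
    airEntry m n j k = if j = k then 1 else 0 := by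
  have hn : n ≠ 0 := by omega
  rw [airEntry_def, if_neg hn]
  have hjn : j % n = j := Nat.mod_eq_of_lt hj
  by_cases hr : m % n = 0
  · rw [if_pos hr, hjn]
  · rw [if_neg hr]
    have h1 : m % n < n := Nat.mod_lt _ (by omega)
    have h2 : n * (m / n) = m - m % n := by
      have := Nat.div_add_mod m n; omega
    have h3 : 1 ≤ m / n := Nat.one_le_div_iff (by omega) |>.mpr hnm
    have : j < m - m % n := by nlinarith
    rw [if_pos this, hjn]

/-- Leading square corner of a wide AIR matrix is the identity. -/
lemma air_widecol {m n j k : ℕ} (hmn : m < n) (hm : 0 < m) (hj : j < m) (hk : k < m) :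
    airEntry m n j k = if j = k then 1 else 0 := by
  have hn : n ≠ 0 := by omega
  have hmod : m % n = m := Nat.mod_eq_of_lt hmn
  rw [airEntry_def, if_neg hn, hmod]
  rw [if_neg (by omega), if_neg (by omega)]
  have h2 : m * (n / m) = n - n % m := by
    have := Nat.div_add_mod n m; omega
  have h3 : 1 ≤ n / m := Nat.one_le_div_iff hm |>.mpr (le_of_lt hmn)
  have hkk : k < n - n % m := by nlinarith
  rw [if_pos hkk]
  have : k % m = k := Nat.mod_eq_of_lt hk
  rw [this]
  simp only [Nat.sub_self, Nat.sub_zero]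
  by_cases h : j = k
  · simp [h]
  · rw [if_neg h, if_neg (by omega)]

/-- Unified corner lemma. -/
lemma air_corner {m n j k : ℕ} (hm : 0 < m) (hn : 0 < n) (hj1 : j < m) (hj2 : j < n)
    (hk1 : k < m) (hk2 : k < n) : airEntry m n j k = if j = k then 1 else 0 := by
  rcases lt_or_ge m n with h | h
  · exact air_widecol h hm hj1 hk1
  · exact air_top h hj2 k

/-- Single-step: bottom rows of a (strictly) tall AIR matrix. -/
lemma air_bottom {m n j : ℕ} (hn : 0 < n) (hnm : n < m) (hj : n ≤ j) (k : ℕ) :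
    airEntry m n j k = airEntry (m - n) n (j - n) k := by
  have hmn : m % n = (m - n) % n := by
    conv_lhs => rw [show m = (m - n) + n by omega]
    rw [Nat.add_mod_right]
  have hjmod : j % n = (j - n) % n := by
    conv_lhs => rw [show j = (j - n) + n by omega]
    rw [Nat.add_mod_right]
  conv_lhs => rw [airEntry_def]
  conv_rhs => rw [airEntry_def]
  rw [if_neg (by omega : ¬ n = 0), if_neg (by omega : ¬ n = 0), hmn, hjmod]
  by_cases hr : (m - n) % n = 0
  · rw [if_pos hr, if_pos hr]
  · rw [if_neg hr, if_neg hr]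
    have hmr : (m - n) % n < n := Nat.mod_lt _ hn
    have hrm : (m - n) % n ≤ m - n := Nat.mod_le _ _
    have hcond : (j < m - (m - n) % n) ↔ (j - n < (m - n) - (m - n) % n) := by omega
    by_cases hc : j < m - (m - n) % n
    · rw [if_pos hc, if_pos (hcond.mp hc)]
    · rw [if_neg hc, if_neg (show ¬(j - n < m - n - (m - n) % n) by omega)]
      have heq : j - (m - (m - n) % n) = (j - n) - ((m - n) - (m - n) % n) := by omega
      rw [heq]

lemma air_transpose_aux (m n j k : ℕ) (hmn : n < m) (hj : j < m) (hk : k < n)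
    (IH : ∀ m' n' j' k', m' + n' < m + n → j' < m' → k' < n' →
      airEntry m' n' j' k' = airEntry n' m' k' j') :
    airEntry m n j k = airEntry n m k j := by
  have hn : 0 < n := by omega
  have hnm : n % m = n := Nat.mod_eq_of_lt hmn
  -- unfold RHS
  conv_rhs => rw [airEntry_def]
  rw [if_neg (show ¬ m = 0 by omega), if_neg (show ¬ n % m = 0 by omega),
    if_neg (show ¬ k < n - n % m by omega)]
  rw [hnm]
  -- RHS is now: if j < m - m % n then (if j % n = k - (n - n) then 1 else 0)
  --             else airEntry n (m % n) (k - (n - n)) (j - (m - m % n))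
  conv_lhs => rw [airEntry_def]
  rw [if_neg (show ¬ n = 0 by omega)]
  by_cases hr : m % n = 0
  · rw [if_pos hr, hr]
    rw [if_pos (show j < m - 0 by omega)]
    simp only [Nat.sub_self, Nat.sub_zero]
  · rw [if_neg hr]
    have hrn : m % n < n := Nat.mod_lt _ hn
    have hrT : m % n ≤ m := Nat.mod_le _ _
    by_cases hc : j < m - m % n
    · rw [if_pos hc, if_pos hc]
      simp only [Nat.sub_self, Nat.sub_zero]
    · rw [if_neg hc, if_neg hc]
      simp only [Nat.sub_self, Nat.sub_zero]
      -- RHS = airEntry (n % m) (m % (n % m)) k (j - (m - m % n)) = airEntry n (m % n) k (j - (m - m % n))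
      rw [IH n (m % n) k (j - (m - m % n)) (by omega) hk (by omega)]
      -- now goal: LHS-tail = airEntry (m % n) n (j - (m - m % n)) k
      conv_rhs => rw [airEntry_def]
      rw [if_neg (show ¬ n = 0 by omega),
        if_neg (show ¬ (m % n) % n = 0 by rw [Nat.mod_eq_of_lt hrn]; exact hr),
        Nat.mod_eq_of_lt hrn,
        if_neg (show ¬ j - (m - m % n) < m % n - m % n by omega)]
      by_cases hk2 : k < n - n % (m % n)
      · rw [if_pos hk2, if_pos hk2]
        simp only [Nat.sub_self, Nat.sub_zero]
      · rw [if_neg hk2, if_neg hk2]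
        simp only [Nat.sub_self, Nat.sub_zero]

lemma air_transpose {m n j k : ℕ} (hj : j < m) (hk : k < n) :
    airEntry m n j k = airEntry n m k j := by
  suffices H : ∀ N m n j k, m + n ≤ N → j < m → k < n →
      airEntry m n j k = airEntry n m k j from H (m+n) m n j k le_rfl hj hk
  intro N
  induction N with
  | zero => intro m n j k h hj hk; omega
  | succ N ihN =>
    intro m n j k hN hj hk
    rcases lt_trichotomy n m with h | h | h
    · exact air_transpose_aux m n j k h hj hk
        (fun m' n' j' k' hlt hj' hk' => ihN m' n' j' k' (by omega) hj' hk')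
    · subst h
      conv_lhs => rw [airEntry_def]
      conv_rhs => rw [airEntry_def]
      rw [if_neg (show ¬ n = 0 by omega), if_neg (show ¬ n = 0 by omega),
        if_pos (Nat.mod_self n), if_pos (Nat.mod_self n),
        Nat.mod_eq_of_lt hj, Nat.mod_eq_of_lt hk]
      by_cases hjk : j = k
      · rw [if_pos hjk, if_pos hjk.symm]
      · rw [if_neg hjk, if_neg (Ne.symm hjk)]
    · exact (air_transpose_aux n m k j h hk hj
        (fun m' n' j' k' hlt hj' hk' => ihN m' n' j' k' (by omega) hj' hk')).symm

lemma muladd_inj {g A B r s : ℕ} (hg : 0 < g) (hr : r < g) (hs : s < g) :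
    g * A + r = g * B + s ↔ (A = B ∧ r = s) := by
  constructor
  · intro h
    have h1 : r = s := by
      have := congrArg (· % g) h
      simpa [Nat.mul_add_mod, Nat.mod_eq_of_lt hr, Nat.mod_eq_of_lt hs] using this
    refine ⟨Nat.eq_of_mul_eq_mul_left hg (by omega), h1⟩
  · rintro ⟨rfl, rfl⟩; rfl

lemma air_modsplit {g n : ℕ} (hg : 0 < g) (hn : 0 < n) (j : ℕ) :
    j % (g * n) = g * ((j / g) % n) + j % g := by
  have h1 := Nat.div_add_mod j g
  have h2 := Nat.div_add_mod (j / g) n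
  have hlt : g * ((j / g) % n) + j % g < g * n := by
    have b1 : (j / g) % n < n := Nat.mod_lt _ hn
    have b2 : j % g < g := Nat.mod_lt _ hg
    have e1 : g * ((j / g) % n + 1) ≤ g * n := Nat.mul_le_mul_left g (by omega)
    have e2 : g * ((j / g) % n + 1) = g * ((j / g) % n) + g := by ring
    omega
  conv_lhs => rw [show j = g * n * (j / g / n) + (g * ((j / g) % n) + j % g) by
    calc j = g * (j / g) + j % g := h1.symm
    _ = g * (n * (j / g / n) + (j / g) % n) + j % g := by rw [h2]
    _ = g * n * (j / g / n) + (g * ((j / g) % n) + j % g) := by ring]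
  rw [Nat.mul_add_mod, Nat.mod_eq_of_lt hlt]

lemma air_scale {g : ℕ} (hg : 0 < g) : ∀ n m j k, airEntry (g * m) (g * n) j k
    = if j % g = k % g then airEntry m n (j / g) (k / g) else 0 := by
  intro n
  induction n using Nat.strong_induction_on with
  | _ n ih =>
  intro m j k
  have hjg : j % g < g := Nat.mod_lt _ hg
  have hkg : k % g < g := Nat.mod_lt _ hg
  rcases Nat.eq_zero_or_pos n with rfl | hn
  · rw [mul_zero]
    conv_lhs => rw [airEntry_def]
    conv_rhs => rw [airEntry_def]
    simp
  have key : ∀ A kk : ℕ, (g * A + j % g = kk) ↔ (j % g = kk % g ∧ A = kk / g) := by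
    intro A kk
    conv_lhs => rw [show kk = g * (kk / g) + kk % g from (Nat.div_add_mod kk g).symm]
    rw [muladd_inj hg hjg (Nat.mod_lt _ hg)]
    tauto
  conv_lhs => rw [airEntry_def]
  conv_rhs => rw [airEntry_def]
  rw [if_neg (show ¬ g * n = 0 by positivity), if_neg (show ¬ n = 0 by omega),
    Nat.mul_mod_mul_left]
  by_cases hr : m % n = 0
  · rw [if_pos (show g * (m % n) = 0 by rw [hr, mul_zero]), if_pos hr,
      air_modsplit hg hn j]
    by_cases h1 : j % g = k % g
    · rw [if_pos h1]
      by_cases h2 : (j / g) % n = k / g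
      · rw [if_pos h2, if_pos ((key _ _).mpr ⟨h1, h2⟩)]
      · rw [if_neg h2, if_neg (fun hEq => h2 ((key _ _).mp hEq).2)]
    · rw [if_neg h1, if_neg (fun hEq => h1 ((key _ _).mp hEq).1)]
  · have hrpos : 0 < m % n := Nat.pos_of_ne_zero hr
    have hrn : m % n < n := Nat.mod_lt _ hn
    rw [if_neg (show ¬ g * (m % n) = 0 by positivity), if_neg hr]
    have hTle : m % n ≤ m := Nat.mod_le _ _
    have hsub : g * m - g * (m % n) = g * (m - m % n) := by rw [Nat.mul_sub]
    rw [hsub]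
    have hdivlt : ∀ X : ℕ, (j < g * X) ↔ (j / g < X) := by
      intro X
      rw [Nat.div_lt_iff_lt_mul hg, mul_comm]
    by_cases hc : j < g * (m - m % n)
    · rw [if_pos hc, if_pos ((hdivlt _).mp hc), air_modsplit hg hn j]
      by_cases h1 : j % g = k % g
      · rw [if_pos h1]
        by_cases h2 : (j / g) % n = k / g
        · rw [if_pos h2, if_pos ((key _ _).mpr ⟨h1, h2⟩)]
        · rw [if_neg h2, if_neg (fun hEq => h2 ((key _ _).mp hEq).2)]
      · rw [if_neg h1, if_neg (fun hEq => h1 ((key _ _).mp hEq).1)]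
    · rw [if_neg hc, if_neg (fun h => hc ((hdivlt _).mpr h))]
      have hjT : g * (m - m % n) ≤ j := by omega
      have hjdivT : m - m % n ≤ j / g := by
        by_contra h
        exact hc ((hdivlt _).mpr (by omega))
      -- n % (m % n) scaling
      rw [Nat.mul_mod_mul_left]
      have hsub2 : g * n - g * (n % (m % n)) = g * (n - n % (m % n)) := by rw [Nat.mul_sub]
      rw [hsub2]
      have hdivltk : ∀ X : ℕ, (k < g * X) ↔ (k / g < X) := by
        intro X
        rw [Nat.div_lt_iff_lt_mul hg, mul_comm]
      have hjsubmod : (j - g * (m - m % n)) % g = j % g := by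
        conv_lhs => rw [show j - g * (m - m % n) = g * (j / g - (m - m % n)) + j % g by
          have e0 : g * (j / g - (m - m % n)) = g * (j / g) - g * (m - m % n) := by
            rw [Nat.mul_sub]
          have e1 := Nat.div_add_mod j g
          have e2 : g * (m - m % n) ≤ g * (j / g) := Nat.mul_le_mul_left g hjdivT
          omega]
        rw [Nat.mul_add_mod, Nat.mod_eq_of_lt hjg]
      have hjsubdiv : (j - g * (m - m % n)) / g = j / g - (m - m % n) := by
        conv_lhs => rw [show j - g * (m - m % n) = g * (j / g - (m - m % n)) + j % g by
          have e0 : g * (j / g - (m - m % n)) = g * (j / g) - g * (m - m % n) := by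
            rw [Nat.mul_sub]
          have e1 := Nat.div_add_mod j g
          have e2 : g * (m - m % n) ≤ g * (j / g) := Nat.mul_le_mul_left g hjdivT
          omega]
        rw [Nat.mul_add_div hg, Nat.div_eq_of_lt hjg, add_zero]
      by_cases hk2 : k < g * (n - n % (m % n))
      · rw [if_pos hk2, if_pos ((hdivltk _).mp hk2),
          air_modsplit hg hrpos k]
        -- goal: (if g*((k/g)%(m%n)) + k%g = j - g*(m-m%n) then 1 else 0) = if j%g=k%g then (if (k/g)%(m%n) = j/g - (m-m%n) then 1 else 0) else 0
        have hrepr : j - g * (m - m % n) = g * (j / g - (m - m % n)) + j % g := by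
          have e0 : g * (j / g - (m - m % n)) = g * (j / g) - g * (m - m % n) := by
            rw [Nat.mul_sub]
          have e1 := Nat.div_add_mod j g
          have e2 : g * (m - m % n) ≤ g * (j / g) := Nat.mul_le_mul_left g hjdivT
          omega
        rw [hrepr]
        by_cases h1 : j % g = k % g
        · rw [if_pos h1]
          by_cases h2 : (k / g) % (m % n) = j / g - (m - m % n)
          · rw [if_pos h2, if_pos ((muladd_inj hg hkg hjg).mpr ⟨h2, h1.symm⟩)]
          · rw [if_neg h2, if_neg (fun hEq => h2 ((muladd_inj hg hkg hjg).mp hEq).1)]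
        · rw [if_neg h1, if_neg (fun hEq => h1 (((muladd_inj hg hkg hjg).mp hEq).2).symm)]
      · rw [if_neg hk2, if_neg (fun h => hk2 ((hdivltk _).mpr h))]
        have hkW : g * (n - n % (m % n)) ≤ k := by omega
        have hkdivW : n - n % (m % n) ≤ k / g := by
          by_contra h
          exact hk2 ((hdivltk _).mpr (by omega))
        have hksubmod : (k - g * (n - n % (m % n))) % g = k % g := by
          conv_lhs => rw [show k - g * (n - n % (m % n)) = g * (k / g - (n - n % (m % n))) + k % g by
            have e0 : g * (k / g - (n - n % (m % n))) = g * (k / g) - g * (n - n % (m % n)) := by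
              rw [Nat.mul_sub]
            have e1 := Nat.div_add_mod k g
            have e2 : g * (n - n % (m % n)) ≤ g * (k / g) := Nat.mul_le_mul_left g hkdivW
            omega]
          rw [Nat.mul_add_mod, Nat.mod_eq_of_lt hkg]
        have hksubdiv : (k - g * (n - n % (m % n))) / g = k / g - (n - n % (m % n)) := by
          conv_lhs => rw [show k - g * (n - n % (m % n)) = g * (k / g - (n - n % (m % n))) + k % g by
            have e0 : g * (k / g - (n - n % (m % n))) = g * (k / g) - g * (n - n % (m % n)) := by
              rw [Nat.mul_sub]
            have e1 := Nat.div_add_mod k g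
            have e2 : g * (n - n % (m % n)) ≤ g * (k / g) := Nat.mul_le_mul_left g hkdivW
            omega]
          rw [Nat.mul_add_div hg, Nat.div_eq_of_lt hkg, add_zero]
        have hrec := ih (n % (m % n)) (Nat.lt_of_lt_of_le (Nat.mod_lt _ hrpos) (le_of_lt hrn))
          (m % n) (j - g * (m - m % n)) (k - g * (n - n % (m % n)))
        rw [hrec, hjsubmod, hjsubdiv, hksubmod, hksubdiv]

def rowF (F : Type*) [Zero F] [One F] (m n j : ℕ) : ℕ → F :=
  fun k => if airEntry m n j k = 1 then 1 else 0

section RowF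
variable {F : Type*} [Field F]

lemma rowF_unit {m n j k : ℕ} (hnm : n ≤ m) (hj : j < n) :
    rowF F m n j k = if j = k then 1 else 0 := by
  unfold rowF; rw [air_top hnm hj]
  by_cases h : j = k <;> simp [h]

lemma rowF_corner {m n j k : ℕ} (hm : 0 < m) (hn : 0 < n) (hj1 : j < m) (hj2 : j < n)
    (hk1 : k < m) (hk2 : k < n) : rowF F m n j k = if j = k then 1 else 0 := by
  unfold rowF; rw [air_corner hm hn hj1 hj2 hk1 hk2]
  by_cases h : j = k <;> simp [h]

lemma rowF_bot {m n j k : ℕ} (hn : 0 < n) (hnm : n < m) (hj : n ≤ j) :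
    rowF F m n j k = rowF F (m - n) n (j - n) k := by
  unfold rowF; rw [air_bottom hn hnm hj]

lemma rowF_transpose {m n j k : ℕ} (hj : j < m) (hk : k < n) :
    rowF F m n j k = rowF F n m k j := by
  unfold rowF; rw [air_transpose hj hk]

lemma add_mod_inj {n x b d : ℕ} (hn : 0 < n) (hb : b < n) (hd : d < n)
    (h : (x + b) % n = (x + d) % n) : b = d := by
  have h2 : b % n = d % n :=
    Nat.ModEq.add_left_cancel (Nat.ModEq.refl x) h
  rwa [Nat.mod_eq_of_lt hb, Nat.mod_eq_of_lt hd] at h2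

lemma sum_single_coeff {s : ℕ} (c : ℕ → F) (f : ℕ → F) (d₀ : ℕ) (hd₀ : d₀ < s)
    (hf : ∀ b, b < s → b ≠ d₀ → c b * f b = 0) (h1 : f d₀ = 1) :
    ∑ d ∈ Finset.range s, c d * f d = c d₀ := by
  rw [Finset.sum_eq_single d₀ (fun b hb hne => hf b (Finset.mem_range.mp hb) hne)
    (fun h => absurd (Finset.mem_range.mpr hd₀) h), h1, mul_one]

lemma sum_range_restrict {a len s : ℕ} (f : ℕ → F) (h : a + len ≤ s)
    (hz : ∀ d, d < s → (d < a ∨ a + len ≤ d) → f d = 0) :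
    ∑ d ∈ Finset.range s, f d = ∑ t ∈ Finset.range len, f (a + t) := by
  have h1 : ∑ d ∈ Finset.Ico a (a + len), f d = ∑ t ∈ Finset.range len, f (a + t) := by
    rw [Finset.sum_Ico_eq_sum_range, Nat.add_sub_cancel_left]
  rw [← h1]
  symm
  apply Finset.sum_subset
  · intro d hd
    rw [Finset.mem_Ico] at hd
    exact Finset.mem_range.mpr (by omega)
  · intro d hd hnd
    rw [Finset.mem_range] at hd
    rw [Finset.mem_Ico] at hnd
    exact hz d hd (by omega)

/-- For a square system over a field, right-nullspace triviality implies
left-nullspace triviality. -/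
lemma flip_system {s : ℕ} (M : ℕ → ℕ → F)
    (h : ∀ c : ℕ → F, (∀ i, i < s → ∑ k ∈ Finset.range s, c k * M i k = 0) →
      ∀ k, k < s → c k = 0) :
    ∀ c : ℕ → F, (∀ k, k < s → ∑ i ∈ Finset.range s, c i * M i k = 0) →
      ∀ i, i < s → c i = 0 := by
  intro c hc i hi
  classical
  set A : Matrix (Fin s) (Fin s) F := Matrix.of (fun i k : Fin s => M i k) with hA
  have hdet : A.det ≠ 0 := by
    intro h0
    obtain ⟨v, hv, hmv⟩ := Matrix.exists_mulVec_eq_zero_iff.mpr h0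
    apply hv
    funext t
    have hts : (t : ℕ) < s := t.isLt
    have hext := h (fun k => if hk : k < s then v ⟨k, hk⟩ else 0) (fun i' hi' => by
      have hrow := congrFun hmv ⟨i', hi'⟩
      simp only [Matrix.mulVec, dotProduct, Pi.zero_apply, Matrix.of_apply, hA] at hrow
      calc ∑ k ∈ Finset.range s, (fun k => if hk : k < s then v ⟨k, hk⟩ else 0) k * M i' k
          = ∑ x : Fin s, M i' x * v x := by
            rw [← Fin.sum_univ_eq_sum_range
              (fun k => (if hk : k < s then v ⟨k, hk⟩ else 0) * M i' k) s]
            apply Finset.sum_congr rfl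
            intro k _
            rw [dif_pos k.isLt, mul_comm]
        _ = 0 := hrow) t hts
    simp only [dif_pos hts] at hext
    simpa using hext
  have hdetT : (Matrix.transpose A).det ≠ 0 := by rwa [Matrix.det_transpose]
  by_contra hci
  apply hdetT
  rw [← Matrix.exists_mulVec_eq_zero_iff]
  refine ⟨fun k => c k, ?_, ?_⟩
  · intro h0
    exact hci (by simpa using congrFun h0 ⟨i, hi⟩)
  · funext k
    have hcol := hc k k.isLt
    simp only [Matrix.mulVec, dotProduct, Matrix.transpose_apply, Matrix.of_apply,
      Pi.zero_apply, hA]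
    calc ∑ x : Fin s, M (x : ℕ) (k : ℕ) * c x
        = ∑ i' ∈ Finset.range s, c i' * M i' k := by
          rw [← Fin.sum_univ_eq_sum_range (fun i' => c i' * M i' k) s]
          apply Finset.sum_congr rfl
          intro i' _
          rw [mul_comm]
      _ = 0 := hcol

end RowF

lemma mod_wrap {m a : ℕ} (h1 : m ≤ a) (h2 : a < 2 * m) : a % m = a - m := by
  rw [Nat.mod_eq_sub_mod h1, Nat.mod_eq_of_lt (by omega)]

def UStat (F : Type*) [Field F] (m n : ℕ) : Prop :=
  ∀ x, x < m → ∀ c : ℕ → F,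
    (∀ k, k < n → ∑ d ∈ Finset.range n, c d * rowF F m n ((x + d) % m) k = 0) →
    ∀ d, d < n → c d = 0

def VStat (F : Type*) [Field F] (m n : ℕ) : Prop :=
  ∀ s, 0 < s → s ≤ n → ∀ c : ℕ → F,
    (∀ k, n - s ≤ k → k < n → ∑ i ∈ Finset.range s, c i * rowF F m n (m - s + i) k = 0) →
    ∀ i, i < s → c i = 0

section UVMain
variable {F : Type*} [Field F]

lemma UV_main : ∀ N m n, m + n ≤ N → 0 < n → n ≤ m → UStat F m n ∧ VStat F m n := by
  intro N
  induction N with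
  | zero => intro m n h hn hnm; omega
  | succ N ihN =>
    intro m n hN hn hnm
    rcases eq_or_lt_of_le hnm with heq | hlt
    · -- base case m = n : identity-like
      subst heq
      constructor
      · intro x hx c hc d₀ hd₀
        have hk : (x + d₀) % n < n := Nat.mod_lt _ hn
        have hsum := hc ((x + d₀) % n) hk
        rw [sum_single_coeff c _ d₀ hd₀ (by
            intro b hb hne
            have hrow : rowF F n n ((x + b) % n) ((x + d₀) % n) = 0 := by
              rw [rowF_corner hn hn (Nat.mod_lt _ hn) (Nat.mod_lt _ hn) hk hk,
                if_neg (fun hEq => hne (add_mod_inj hn hb hd₀ hEq))]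
            rw [hrow, mul_zero])
          (by
            rw [rowF_corner hn hn hk hk hk hk, if_pos rfl])] at hsum
        exact hsum
      · intro s hs0 hsn c hc i₀ hi₀
        have hk1 : n - s ≤ n - s + i₀ := by omega
        have hk2 : n - s + i₀ < n := by omega
        have hsum := hc (n - s + i₀) hk1 hk2
        rw [sum_single_coeff c _ i₀ hi₀ (by
            intro b hb hne
            have hrow : rowF F n n (n - s + b) (n - s + i₀) = 0 := by
              rw [rowF_unit le_rfl (by omega), if_neg (by omega)]
            rw [hrow, mul_zero])
          (by rw [rowF_unit le_rfl (by omega), if_pos (by omega)])] at hsum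
        exact hsum
    · -- m > n
      set mp := m - n with hmp_def
      have hmp : 0 < mp := by omega
      constructor
      · -- UStat
        intro x hx c hc
        by_cases hwrap : x + n ≤ m
        · by_cases hxn : n ≤ x
          · -- U1 : no wrap, all rows in the bottom block
            obtain ⟨hU', _⟩ := ihN mp n (by omega) hn (by omega)
            apply hU' (x - n) (by omega) c
            intro k hk
            refine Eq.trans (Finset.sum_congr rfl ?_) (hc k hk)
            intro d hd
            rw [Finset.mem_range] at hd
            rw [Nat.mod_eq_of_lt (show x - n + d < mp by omega),
              Nat.mod_eq_of_lt (show x + d < m by omega),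
              rowF_bot hn hlt (show n ≤ x + d by omega),
              show x + d - n = x - n + d by omega]
          · -- U2 : no wrap, window starts in the top block
            push_neg at hxn
            have hbot : ∀ t, t < x → c (n - x + t) = 0 := by
              intro t ht
              have hsum := hc t (by omega)
              rw [sum_single_coeff c _ (n - x + t) (by omega) (by
                  intro b hb hne
                  by_cases hbx : b < n - x
                  · have hrow : rowF F m n ((x + b) % m) t = 0 := by
                      rw [Nat.mod_eq_of_lt (by omega), rowF_unit hnm (by omega),
                        if_neg (by omega)]
                    rw [hrow, mul_zero]
                  · have hrow : rowF F m n ((x + b) % m) t = 0 := by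
                      rw [Nat.mod_eq_of_lt (by omega), rowF_bot hn hlt (by omega),
                        rowF_corner hmp hn (by omega) (by omega) (by omega) (by omega),
                        if_neg (by omega)]
                    rw [hrow, mul_zero])
                (by
                  rw [Nat.mod_eq_of_lt (by omega), rowF_bot hn hlt (by omega),
                    rowF_corner hmp hn (by omega) (by omega) (by omega) (by omega),
                    if_pos (by omega)])] at hsum
              exact hsum
            intro d₀ hd₀
            by_cases hdx : d₀ < n - x
            · have hsum := hc (x + d₀) (by omega)
              rw [sum_single_coeff c _ d₀ hd₀ (by
                  intro b hb hne
                  by_cases hbx : b < n - x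
                  · have hrow : rowF F m n ((x + b) % m) (x + d₀) = 0 := by
                      rw [Nat.mod_eq_of_lt (by omega), rowF_unit hnm (by omega),
                        if_neg (by omega)]
                    rw [hrow, mul_zero]
                  · rw [show b = n - x + (b - (n - x)) by omega, hbot _ (by omega), zero_mul])
                (by
                  rw [Nat.mod_eq_of_lt (by omega), rowF_unit hnm (by omega), if_pos rfl])] at hsum
              exact hsum
            · rw [show d₀ = n - x + (d₀ - (n - x)) by omega]
              exact hbot _ (by omega)
        · -- wrap: x > m - n
          push_neg at hwrap
          by_cases hsub : n ≤ mp
          · -- U3a : sub is tall, whole window transfers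
            obtain ⟨hU', _⟩ := ihN mp n (by omega) hn hsub
            apply hU' (x - n) (by omega) c
            intro k hk
            refine Eq.trans (Finset.sum_congr rfl ?_) (hc k hk)
            intro d hd
            rw [Finset.mem_range] at hd
            by_cases hcase : x + d < m
            · rw [Nat.mod_eq_of_lt hcase,
                Nat.mod_eq_of_lt (show x - n + d < mp by omega),
                rowF_bot hn hlt (show n ≤ x + d by omega),
                show x + d - n = x - n + d by omega]
            · have h1 : (x + d) % m = x + d - m := mod_wrap (by omega) (by omega)
              have h2 : (x - n + d) % mp = x + d - m := by
                rw [mod_wrap (show mp ≤ x - n + d by omega) (by omega)]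
                omega
              rw [h1, h2, rowF_unit hsub (show x + d - m < n by omega),
                rowF_unit hnm (show x + d - m < n by omega)]
          · -- U3b : sub is wide
            push_neg at hsub
            by_cases hxn : x ≤ n
            · -- U3b-i
              obtain ⟨hUt, _⟩ := ihN n mp (by omega) hmp (le_of_lt hsub)
              have hbot0 := flip_system (F := F) (s := mp)
                (fun a b => rowF F n mp (x - mp + b) a)
                (by
                  intro cc hcc δ hδ
                  apply hUt (x - mp) (by omega) cc ?_ δ hδ
                  intro k hk
                  refine Eq.trans (Finset.sum_congr rfl ?_) (hcc k hk)
                  intro δ' hδ'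
                  rw [Finset.mem_range] at hδ'
                  rw [Nat.mod_eq_of_lt (by omega)])
              have hbot : ∀ t, t < mp → c (n - x + t) = 0 := by
                refine hbot0 (fun t => c (n - x + t)) ?_
                intro i hi
                have hsum := hc (x - mp + i) (by omega)
                rw [sum_range_restrict (a := n - x) (len := mp) _ (by omega) (by
                    intro d hd hout
                    rcases hout with hout | hout
                    · have hrow : rowF F m n ((x + d) % m) (x - mp + i) = 0 := by
                        rw [Nat.mod_eq_of_lt (by omega), rowF_unit hnm (by omega),
                          if_neg (by omega)]
                      rw [hrow, mul_zero]
                    · have hrow : rowF F m n ((x + d) % m) (x - mp + i) = 0 := by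
                        rw [mod_wrap (by omega) (by omega), rowF_unit hnm (by omega),
                          if_neg (by omega)]
                      rw [hrow, mul_zero])] at hsum
                refine Eq.trans (Finset.sum_congr rfl ?_) hsum
                intro t ht
                rw [Finset.mem_range] at ht
                congr 1
                rw [Nat.mod_eq_of_lt (show x + (n - x + t) < m by omega),
                  show x + (n - x + t) = n + t by omega,
                  rowF_bot hn hlt (by omega), show n + t - n = t by omega,
                  rowF_transpose (show t < mp by omega) (show x - mp + i < n by omega)]
              intro d₀ hd₀
              by_cases hcase1 : d₀ < n - x
              · have hsum := hc (x + d₀) (by omega)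
                rw [sum_single_coeff c _ d₀ hd₀ (by
                    intro b hb hne
                    by_cases hb1 : b < n - x
                    · have hrow : rowF F m n ((x + b) % m) (x + d₀) = 0 := by
                        rw [Nat.mod_eq_of_lt (by omega), rowF_unit hnm (by omega),
                          if_neg (by omega)]
                      rw [hrow, mul_zero]
                    · by_cases hb2 : b < n - x + mp
                      · rw [show b = n - x + (b - (n - x)) by omega, hbot _ (by omega),
                          zero_mul]
                      · have hrow : rowF F m n ((x + b) % m) (x + d₀) = 0 := by
                          rw [mod_wrap (by omega) (by omega), rowF_unit hnm (by omega),
                            if_neg (by omega)]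
                        rw [hrow, mul_zero])
                  (by
                    rw [Nat.mod_eq_of_lt (by omega), rowF_unit hnm (by omega),
                      if_pos rfl])] at hsum
                exact hsum
              · by_cases hcase2 : d₀ < n - x + mp
                · rw [show d₀ = n - x + (d₀ - (n - x)) by omega]
                  exact hbot _ (by omega)
                · have hsum := hc (x + d₀ - m) (by omega)
                  rw [sum_single_coeff c _ d₀ hd₀ (by
                      intro b hb hne
                      by_cases hb1 : b < n - x
                      · have hrow : rowF F m n ((x + b) % m) (x + d₀ - m) = 0 := by
                          rw [Nat.mod_eq_of_lt (by omega), rowF_unit hnm (by omega),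
                            if_neg (by omega)]
                        rw [hrow, mul_zero]
                      · by_cases hb2 : b < n - x + mp
                        · rw [show b = n - x + (b - (n - x)) by omega, hbot _ (by omega),
                            zero_mul]
                        · have hrow : rowF F m n ((x + b) % m) (x + d₀ - m) = 0 := by
                            rw [mod_wrap (by omega) (by omega), rowF_unit hnm (by omega),
                              if_neg (by omega)]
                          rw [hrow, mul_zero])
                    (by
                      rw [mod_wrap (by omega) (by omega), rowF_unit hnm (by omega),
                        if_pos rfl])] at hsum
                  exact hsum
            · -- U3b-ii : x > n
              push_neg at hxn
              set s := m - x with hs_def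
              have hs0 : 0 < s := by omega
              have hsmp : s < mp := by omega
              obtain ⟨_, hVt⟩ := ihN n mp (by omega) hmp (le_of_lt hsub)
              have hbot0 := flip_system (F := F) (s := s)
                (fun a b => rowF F n mp (n - s + b) (mp - s + a))
                (by
                  intro cc hcc δ hδ
                  apply hVt s hs0 (by omega) cc ?_ δ hδ
                  intro col hcol1 hcol2
                  have h2 := hcc (col - (mp - s)) (by omega)
                  rwa [show mp - s + (col - (mp - s)) = col by omega] at h2)
              have hbot : ∀ t, t < s → c t = 0 := by
                refine hbot0 c ?_
                intro i hi
                have hsum := hc (n - s + i) (by omega)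
                rw [sum_range_restrict (a := 0) (len := s) _ (by omega) (by
                    intro d hd hout
                    rcases hout with hout | hout
                    · omega
                    · have hrow : rowF F m n ((x + d) % m) (n - s + i) = 0 := by
                        rw [mod_wrap (by omega) (by omega), rowF_unit hnm (by omega),
                          if_neg (by omega)]
                      rw [hrow, mul_zero])] at hsum
                simp only [Nat.zero_add] at hsum
                refine Eq.trans (Finset.sum_congr rfl ?_) hsum
                intro t ht
                rw [Finset.mem_range] at ht
                congr 1
                rw [Nat.mod_eq_of_lt (show x + t < m by omega),
                  rowF_bot hn hlt (by omega),
                  show x + t - n = mp - s + t by omega,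
                  rowF_transpose (show mp - s + t < mp by omega) (show n - s + i < n by omega)]
              intro d₀ hd₀
              by_cases hcase1 : d₀ < s
              · exact hbot _ hcase1
              · have hsum := hc (x + d₀ - m) (by omega)
                rw [sum_single_coeff c _ d₀ hd₀ (by
                    intro b hb hne
                    by_cases hb1 : b < s
                    · rw [hbot _ hb1, zero_mul]
                    · have hrow : rowF F m n ((x + b) % m) (x + d₀ - m) = 0 := by
                        rw [mod_wrap (by omega) (by omega), rowF_unit hnm (by omega),
                          if_neg (by omega)]
                      rw [hrow, mul_zero])
                  (by
                    rw [mod_wrap (by omega) (by omega), rowF_unit hnm (by omega),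
                      if_pos rfl])] at hsum
                exact hsum
      · -- VStat
        intro s hs0 hsn c hc
        by_cases hsmn : s ≤ mp
        · -- V1 : all s rows are bottom rows
          have hc' : ∀ k, n - s ≤ k → k < n →
              ∑ i ∈ Finset.range s, c i * rowF F mp n (mp - s + i) k = 0 := by
            intro k hk1 hk2
            refine Eq.trans (Finset.sum_congr rfl ?_) (hc k hk1 hk2)
            intro i hi
            rw [Finset.mem_range] at hi
            rw [rowF_bot hn hlt (show n ≤ m - s + i by omega),
              show m - s + i - n = mp - s + i by omega]
          by_cases hsub : n ≤ mp
          · obtain ⟨_, hV'⟩ := ihN mp n (by omega) hn hsub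
            exact hV' s hs0 hsn c hc'
          · push_neg at hsub
            obtain ⟨_, hVt⟩ := ihN n mp (by omega) hmp (le_of_lt hsub)
            refine flip_system (F := F) (s := s)
              (fun a b => rowF F n mp (n - s + b) (mp - s + a))
              (by
                intro cc hcc δ hδ
                apply hVt s hs0 hsmn cc ?_ δ hδ
                intro col hcol1 hcol2
                have h2 := hcc (col - (mp - s)) (by omega)
                rwa [show mp - s + (col - (mp - s)) = col by omega] at h2) c ?_
            intro i hi
            have hsum := hc' (n - s + i) (by omega) (by omega)
            refine Eq.trans (Finset.sum_congr rfl ?_) hsum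
            intro t ht
            rw [Finset.mem_range] at ht
            rw [rowF_transpose (show mp - s + t < mp by omega) (show n - s + i < n by omega)]
        · -- V2 : s > mp, top rows appear
          push_neg at hsmn
          obtain ⟨hUt, _⟩ := ihN n mp (by omega) hmp (by omega)
          have hbot0 := flip_system (F := F) (s := mp)
            (fun a b => rowF F n mp (n - s + b) a)
            (by
              intro cc hcc δ hδ
              apply hUt (n - s) (by omega) cc ?_ δ hδ
              intro k hk
              refine Eq.trans (Finset.sum_congr rfl ?_) (hcc k hk)
              intro δ' hδ'
              rw [Finset.mem_range] at hδ'
              rw [Nat.mod_eq_of_lt (by omega)])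
          have hbot : ∀ t, t < mp → c (s - mp + t) = 0 := by
            refine hbot0 (fun t => c (s - mp + t)) ?_
            intro i hi
            have hsum := hc (n - s + i) (by omega) (by omega)
            rw [sum_range_restrict (a := s - mp) (len := mp) _ (by omega) (by
                intro d hd hout
                rcases hout with hout | hout
                · have hrow : rowF F m n (m - s + d) (n - s + i) = 0 := by
                    rw [rowF_unit hnm (by omega), if_neg (by omega)]
                  rw [hrow, mul_zero]
                · omega)] at hsum
            refine Eq.trans (Finset.sum_congr rfl ?_) hsum
            intro t ht
            rw [Finset.mem_range] at ht
            congr 1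
            rw [show m - s + (s - mp + t) = n + t by omega,
              rowF_bot hn hlt (by omega), show n + t - n = t by omega,
              rowF_transpose (show t < mp by omega) (show n - s + i < n by omega)]
          intro i₀ hi₀
          by_cases hcase : i₀ < s - mp
          · have hsum := hc (m - s + i₀) (by omega) (by omega)
            rw [sum_single_coeff c _ i₀ hi₀ (by
                intro b hb hne
                by_cases hb1 : b < s - mp
                · have hrow : rowF F m n (m - s + b) (m - s + i₀) = 0 := by
                    rw [rowF_unit hnm (by omega), if_neg (by omega)]
                  rw [hrow, mul_zero]
                · rw [show b = s - mp + (b - (s - mp)) by omega, hbot _ (by omega), zero_mul])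
              (by rw [rowF_unit hnm (by omega), if_pos rfl])] at hsum
            exact hsum
          · rw [show i₀ = s - mp + (i₀ - (s - mp)) by omega]
            exact hbot _ (by omega)

end UVMain

section Small
variable {F : Type*} [Field F]

lemma small_notMem_span (m n : ℕ) (hm : 0 < m) (hn : 0 < n) (J : ℕ) (hJ : J < m) :
    (fun k : Fin n => rowF F m n J (k : ℕ)) ∉ Submodule.span F
      {v : Fin n → F | ∃ δ : ℕ, 0 < δ ∧ δ < n ∧ (J + δ) % m ≠ J ∧
        v = fun k : Fin n => rowF F m n ((J + δ) % m) (k : ℕ)} := by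
  intro hmem
  rw [Submodule.mem_span_set'] at hmem
  obtain ⟨t, f, gv, hsum⟩ := hmem
  choose δ hδ0 hδn hδne hδv using fun i => (gv i).2
  set c : ℕ → F := fun d => (if d = 0 then (-1 : F) else 0) +
    ∑ i ∈ Finset.univ.filter (fun i => δ i = d), f i with hc_def
  have hc0 : c 0 = -1 := by
    have hempty : Finset.univ.filter (fun i => δ i = 0) = (∅ : Finset (Fin t)) := by
      apply Finset.filter_false_of_mem
      intro i _
      have := hδ0 i
      omega
    rw [hc_def]
    simp [hempty]
  have hcd : ∀ d, d ≠ 0 → c d = ∑ i ∈ Finset.univ.filter (fun i => δ i = d), f i := by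
    intro d hd
    rw [hc_def]
    simp only [if_neg hd, zero_add]
  have hrel : ∀ k, k < n → ∑ d ∈ Finset.range n, c d * rowF F m n ((J + d) % m) k = 0 := by
    intro k hk
    have expand : ∀ d ∈ Finset.range n, c d * rowF F m n ((J + d) % m) k
        = (if d = 0 then (-1 : F) else 0) * rowF F m n ((J + d) % m) k
          + ∑ i ∈ Finset.univ.filter (fun i => δ i = d),
              f i * rowF F m n ((J + δ i) % m) k := by
      intro d _
      rw [hc_def, add_mul, Finset.sum_mul]
      congr 1
      apply Finset.sum_congr rfl
      intro i hi
      rw [(Finset.mem_filter.mp hi).2]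
    rw [Finset.sum_congr rfl expand, Finset.sum_add_distrib]
    have part1 : ∑ d ∈ Finset.range n,
        (if d = 0 then (-1 : F) else 0) * rowF F m n ((J + d) % m) k
        = - rowF F m n J k := by
      rw [Finset.sum_eq_single 0 (by
          intro b _ hb
          rw [if_neg hb, zero_mul])
        (fun h => absurd (Finset.mem_range.mpr hn) h)]
      rw [if_pos rfl, Nat.add_zero, Nat.mod_eq_of_lt hJ, neg_one_mul]
    have part2 : ∑ d ∈ Finset.range n, ∑ i ∈ Finset.univ.filter (fun i => δ i = d),
          f i * rowF F m n ((J + δ i) % m) k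
        = ∑ i : Fin t, f i * rowF F m n ((J + δ i) % m) k := by
      exact Finset.sum_fiberwise_of_maps_to (fun i _ => Finset.mem_range.mpr (hδn i)) _
    rw [part1, part2]
    have hval : ∑ i : Fin t, f i * rowF F m n ((J + δ i) % m) k = rowF F m n J k := by
      have := congrFun hsum ⟨k, hk⟩
      rw [Finset.sum_apply] at this
      rw [← this]
      apply Finset.sum_congr rfl
      intro i _
      rw [Pi.smul_apply, smul_eq_mul]
      congr 1
      have := congrFun (hδv i) ⟨k, hk⟩
      exact this.symm
    rw [hval]
    ring
  by_cases hmn : n ≤ m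
  · have hU := (UV_main (F := F) (m + n) m n le_rfl hn hmn).1
    have := hU J hJ c hrel 0 hn
    rw [hc0] at this
    exact (neg_ne_zero.mpr one_ne_zero) this
  · push_neg at hmn
    have hJn : J < n := by omega
    have hsum0 := hrel J hJn
    rw [Finset.sum_eq_single 0 (by
        intro d hd hd0
        rw [Finset.mem_range] at hd
        by_cases hrow : (J + d) % m = J
        · rw [hcd d hd0]
          have hempty : Finset.univ.filter (fun i => δ i = d) = (∅ : Finset (Fin t)) := by
            apply Finset.filter_false_of_mem
            intro i _ hieq
            exact hδne i (hieq ▸ hrow)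
          rw [hempty, Finset.sum_empty, zero_mul]
        · have h0 : rowF F m n ((J + d) % m) J = 0 := by
            rw [rowF_corner hm hn (Nat.mod_lt _ hm) (by
                have := Nat.mod_lt (J + d) hm; omega) hJ hJn, if_neg hrow]
          rw [h0, mul_zero])
      (fun h => absurd (Finset.mem_range.mpr hn) h)] at hsum0
    rw [Nat.add_zero, Nat.mod_eq_of_lt hJ, hc0,
      rowF_corner hm hn hJ hJn hJ hJn, if_pos rfl, mul_one] at hsum0
    exact (neg_ne_zero.mpr one_ne_zero) hsum0

end Small

section Aux
variable {F : Type*} [Field F]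

/-- Key reduction lemma: a row of the AIR matrix is outside the span of any set of rows
in which every row with the same index-residue mod `gcd m n` sits at a nonzero offset
(a multiple of the gcd, of size `< n`) from it. -/
lemma air_notMem_span_window (m n : ℕ) (hm : 0 < m) (hn : 0 < n) (jv : ℕ) (hjv : jv < m) :
    airRow F m n jv ∉ Submodule.span F
      {v : Fin n → F | ∃ y : ℕ,
        (y % Nat.gcd m n = jv % Nat.gcd m n → ∃ d : ℕ, 0 < d ∧ d < n ∧ Nat.gcd m n ∣ d ∧
          (jv + d) % m ≠ jv ∧ y = (jv + d) % m) ∧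
        v = airRow F m n y} := by
  intro hmem
  set g := Nat.gcd m n with hg_def
  have hg : 0 < g := Nat.gcd_pos_of_pos_left n hm
  have hgm : g ∣ m := Nat.gcd_dvd_left m n
  have hgn : g ∣ n := Nat.gcd_dvd_right m n
  set m₀ := m / g with hm₀_def
  set n₀ := n / g with hn₀_def
  have hmm₀ : m = g * m₀ := (Nat.mul_div_cancel' hgm).symm
  have hnn₀ : n = g * n₀ := (Nat.mul_div_cancel' hgn).symm
  have hm₀ : 0 < m₀ := by
    rcases Nat.eq_zero_or_pos m₀ with h | h
    · rw [h, mul_zero] at hmm₀; omega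
    · exact h
  have hn₀ : 0 < n₀ := by
    rcases Nat.eq_zero_or_pos n₀ with h | h
    · rw [h, mul_zero] at hnn₀; omega
    · exact h
  set ρ := jv % g with hρ_def
  set J := jv / g with hJ_def
  have hρ : ρ < g := Nat.mod_lt _ hg
  have hJm₀ : J < m₀ := by
    rw [hJ_def, Nat.div_lt_iff_lt_mul hg]
    have h1 : m₀ * g = g * m₀ := mul_comm _ _
    omega
  have hjdm : g * J + ρ = jv := by rw [hJ_def, hρ_def]; exact Nat.div_add_mod jv g
  have hcol : ∀ Kk : Fin n₀, g * (Kk : ℕ) + ρ < n := by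
    intro Kk
    have h1 : g * ((Kk : ℕ) + 1) ≤ g * n₀ := Nat.mul_le_mul_left g Kk.isLt
    have h2 : g * ((Kk : ℕ) + 1) = g * (Kk : ℕ) + g := by ring
    omega
  set φ : (Fin n → F) →ₗ[F] (Fin n₀ → F) :=
    { toFun := fun v => fun Kk => v ⟨g * (Kk : ℕ) + ρ, hcol Kk⟩
      map_add' := fun v w => rfl
      map_smul' := fun r v => rfl } with hφ_def
  have he1 : ∀ Kk : Fin n₀, (g * (Kk : ℕ) + ρ) % g = ρ := by
    intro Kk; rw [Nat.mul_add_mod, Nat.mod_eq_of_lt hρ]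
  have he2 : ∀ Kk : Fin n₀, (g * (Kk : ℕ) + ρ) / g = (Kk : ℕ) := by
    intro Kk; rw [Nat.mul_add_div hg, Nat.div_eq_of_lt hρ, add_zero]
  have hproj : ∀ y : ℕ, φ (airRow F m n y)
      = if y % g = ρ then (fun Kk : Fin n₀ => rowF F m₀ n₀ (y / g) (Kk : ℕ)) else 0 := by
    intro y
    by_cases hres : y % g = ρ
    · rw [if_pos hres]
      funext Kk
      show (if airEntry m n y (g * (Kk : ℕ) + ρ) = 1 then (1 : F) else 0) = _
      rw [hmm₀, hnn₀, air_scale hg n₀ m₀ y (g * (Kk : ℕ) + ρ), he1 Kk, he2 Kk, if_pos hres]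
      rfl
    · rw [if_neg hres]
      funext Kk
      show (if airEntry m n y (g * (Kk : ℕ) + ρ) = 1 then (1 : F) else 0) = 0
      rw [hmm₀, hnn₀, air_scale hg n₀ m₀ y (g * (Kk : ℕ) + ρ), he1 Kk, if_neg hres]
      simp
  have hstep := Submodule.mem_map_of_mem (f := φ) hmem
  rw [Submodule.map_span] at hstep
  set smallS : Set (Fin n₀ → F) := {v | ∃ δ : ℕ, 0 < δ ∧ δ < n₀ ∧ (J + δ) % m₀ ≠ J ∧
      v = fun Kk : Fin n₀ => rowF F m₀ n₀ ((J + δ) % m₀) (Kk : ℕ)} with hsmallS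
  have himg : φ '' {v : Fin n → F | ∃ y : ℕ,
        (y % g = ρ → ∃ d : ℕ, 0 < d ∧ d < n ∧ g ∣ d ∧
          (jv + d) % m ≠ jv ∧ y = (jv + d) % m) ∧
        v = airRow F m n y} ⊆ insert (0 : Fin n₀ → F) smallS := by
    rintro v ⟨w, hw, rfl⟩
    obtain ⟨y, hcond, rfl⟩ := hw
    by_cases hres : y % g = ρ
    · obtain ⟨d, hd0, hdn, hgd, hdne, rfl⟩ := hcond hres
      set δ := d / g with hδ_def
      have hdδ : d = g * δ := (Nat.mul_div_cancel' hgd).symm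
      have hδn₀ : δ < n₀ := by
        rw [hδ_def, Nat.div_lt_iff_lt_mul hg]
        have h1 : n₀ * g = g * n₀ := mul_comm _ _
        omega
      have hδ0 : 0 < δ := by
        rcases Nat.eq_zero_or_pos δ with h | h
        · rw [h, mul_zero] at hdδ; omega
        · exact h
      have hyval : (jv + d) % m = g * ((J + δ) % m₀) + ρ := by
        have h16 : jv + d = g * (J + δ) + ρ := by
          rw [Nat.mul_add]
          omega
        rw [h16, hmm₀, air_modsplit hg hm₀ (g * (J + δ) + ρ),
          Nat.mul_add_div hg, Nat.div_eq_of_lt hρ, add_zero,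
          Nat.mul_add_mod, Nat.mod_eq_of_lt hρ]
      have hJne : (J + δ) % m₀ ≠ J := by
        intro hEq
        apply hdne
        rw [hyval, hEq]
        omega
      rw [hproj ((jv + d) % m), if_pos hres]
      refine Set.mem_insert_of_mem _ ⟨δ, hδ0, hδn₀, hJne, ?_⟩
      have hydiv : ((jv + d) % m) / g = (J + δ) % m₀ := by
        rw [hyval, Nat.mul_add_div hg, Nat.div_eq_of_lt hρ, add_zero]
      rw [hydiv]
    · rw [hproj y, if_neg hres]
      exact Set.mem_insert _ _
  have hmono := Submodule.span_mono himg hstep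
  rw [Submodule.span_insert_zero] at hmono
  have h20 : φ (airRow F m n jv) = fun Kk : Fin n₀ => rowF F m₀ n₀ J (Kk : ℕ) := by
    rw [hproj jv, if_pos hρ_def.symm, ← hJ_def]
  rw [h20] at hmono
  exact small_notMem_span m₀ n₀ hm₀ hn₀ J hJm₀ hmono

end Aux

/-- For the `(K,D,U)` SUICP-SNI and every `(a,b) ∈ S_{K,D,U}`
(i.e. `b ≥ 1` and `gcd(bK, b(D+1)+a) ≥ b(U+1)`), the AIR matrix of size
`Kb × (b(D+1)+a)` is a valid `b`-dimensional vector linear encoding matrix over any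
field `F`: every row `L_j` (with `t = ⌊j/b⌋`) is outside the `F`-linear span of the
other rows with indices in the window `[(t-U)b, (t+D+1)b - 1]` (mod `Kb`); so `L`
achieves the rate `D + 1 + a/b` for the `(K,D,U)` SUICP-SNI over every field. -/
theorem air_vector_code_valid (F : Type*) [Field F] (K D U a b : ℕ)
    (hUD : U ≤ D) (hUDK : U + D < K) (hb : 1 ≤ b)
    (hS : b * (U + 1) ≤ Nat.gcd (b * K) (b * (D + 1) + a)) :
    ∀ j : Fin (K * b), airRow F (K * b) (b * (D + 1) + a) (j : ℕ) ∉ Submodule.span F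
      { v : Fin (b * (D + 1) + a) → F | ∃ j' : Fin (K * b),
          (j' ≠ j ∧ ∃ s : ℕ, s < (U + D + 1) * b ∧
            (j' : ℕ) = (((j : ℕ) / b + K - U) * b + s) % (K * b)) ∧
          v = airRow F (K * b) (b * (D + 1) + a) (j' : ℕ) } := by
  intro j hmem
  have hK : 0 < K := by omega
  have hb0 : 0 < b := hb
  have hm : 0 < K * b := Nat.mul_pos hK hb0
  have hbn : b ≤ b * (D + 1) + a := by
    have h1 : b * 1 ≤ b * (D + 1) := Nat.mul_le_mul_left b (by omega)
    omega
  have hn : 0 < b * (D + 1) + a := by omega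
  have hg : 0 < Nat.gcd (K * b) (b * (D + 1) + a) :=
    Nat.gcd_pos_of_pos_left _ hm
  have hgm : Nat.gcd (K * b) (b * (D + 1) + a) ∣ K * b := Nat.gcd_dvd_left _ _
  have hbU : b * (U + 1) ≤ Nat.gcd (K * b) (b * (D + 1) + a) := by
    have h1 : Nat.gcd (b * K) (b * (D + 1) + a) = Nat.gcd (K * b) (b * (D + 1) + a) := by
      rw [mul_comm b K]
    omega
  have hgem : Nat.gcd (K * b) (b * (D + 1) + a) ≤ K * b := Nat.le_of_dvd hm hgm
  refine air_notMem_span_window (K * b) (b * (D + 1) + a) hm hn (j : ℕ) j.isLt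
    (Submodule.span_mono ?_ hmem)
  rintro v ⟨j', ⟨hne, s, hs, hj'⟩, rfl⟩
  refine ⟨(j' : ℕ), ?_, rfl⟩
  intro hres
  set g := Nat.gcd (K * b) (b * (D + 1) + a) with hg_def
  set jv := (j : ℕ) with hjv_def
  set X := (jv / b + K - U) * b + s with hX_def
  have hjb : jv % b < b := Nat.mod_lt _ hb0
  set e := U * b + jv % b with he_def
  have heg : e < g := by
    have h1 : U * b + b = b * (U + 1) := by ring
    omega
  obtain ⟨c, hcKU⟩ : ∃ c, K = U + c := ⟨K - U, by omega⟩
  have hKUc : K - U = c := by omega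
  have hXe : X + e = jv + K * b + s := by
    have hshow : jv / b + K - U = jv / b + c := by
      rw [← hKUc]
      exact Nat.add_sub_assoc (by omega) _
    have hA1 : (jv / b + K - U) * b = jv / b * b + c * b := by
      rw [hshow, Nat.add_mul]
    have h1 : jv / b * b + jv % b = jv := by
      rw [mul_comm]
      exact Nat.div_add_mod jv b
    have hcb : c * b + U * b = K * b := by
      rw [← Nat.add_mul, show c + U = K by omega]
    rw [hX_def, hA1]
    omega
  clear hX_def
  clear_value X
  have hmodg : (jv + K * b + s - e) % g = jv % g := by
    have hh1 : (j' : ℕ) % g = ((jv + K * b + s - e) % (K * b)) % g := by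
      rw [hj']
      congr 2
      omega
    rw [Nat.mod_mod_of_dvd _ hgm] at hh1
    rw [← hh1, hres]
  have hB : (K * b + s - e) % g = 0 := by
    have h5 : (jv + (K * b + s - e)) % g = jv % g := by
      rw [show jv + (K * b + s - e) = jv + K * b + s - e by omega]
      exact hmodg
    have h7 : Nat.ModEq g (jv + (K * b + s - e)) (jv + 0) := by
      rw [Nat.add_zero]; exact h5
    have h8 := Nat.ModEq.add_left_cancel (Nat.ModEq.refl jv) h7
    have h9 : (K * b + s - e) % g = 0 % g := h8
    rwa [Nat.zero_mod] at h9
  have hse : e ≤ s := by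
    by_contra hlt'
    push_neg at hlt'
    have hdvd1 : g ∣ (K * b + s - e) := Nat.dvd_of_mod_eq_zero hB
    rw [show K * b + s - e = K * b - (e - s) by omega] at hdvd1
    have hdvd2 : g ∣ (e - s) := by
      have h9 := Nat.dvd_sub hgm hdvd1
      rwa [show K * b - (K * b - (e - s)) = e - s by omega] at h9
    have := Nat.le_of_dvd (by omega) hdvd2
    omega
  have hgd : g ∣ (s - e) := by
    have hdvd1 : g ∣ (K * b + (s - e)) := by
      apply Nat.dvd_of_mod_eq_zero
      rw [show K * b + (s - e) = K * b + s - e by omega]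
      exact hB
    have h10 := Nat.dvd_sub hdvd1 hgm
    rwa [show (K * b + (s - e)) - K * b = s - e by omega] at h10
  have hj'2 : (j' : ℕ) = (jv + (s - e)) % (K * b) := by
    rw [hj', show X = (jv + (s - e)) + K * b by omega, Nat.add_mod_right]
  have hdne : (jv + (s - e)) % (K * b) ≠ jv := by
    intro hEq
    exact hne (Fin.ext (hj'2.trans hEq))
  have hd0 : 0 < s - e := by
    rcases Nat.eq_zero_or_pos (s - e) with h | h
    · exfalso
      apply hdne
      rw [h, Nat.add_zero, Nat.mod_eq_of_lt j.isLt]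
    · exact h
  have hdn : s - e < b * (D + 1) + a := by
    have h12 : (U + D + 1) * b = U * b + (D + 1) * b := by ring
    have h13 : (D + 1) * b = b * (D + 1) := by ring
    omega
  exact ⟨s - e, hd0, hdn, hgd, hdne, hj'2⟩
end

section
/- Fix integers D and U with 0 ≤ U ≤ D. For every real ε > 0 there exists K_0 such that for every integer K ≥ K_0 (so that in particular U + D < K) there exists (a,b) ∈ S_{K,D,U} with a/b < ε; consequently, as K → ∞, the infimum over (a,b) ∈ S_{K,D,U} of the achievable rate D + 1 + a/b converges to D + 1, recovering the asymptotic capacity 1/(D+1) of the SUICP-SNI. -/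
lemma key_witness (D U : ℕ) (hUD : U ≤ D) (ε : ℝ) (hε : 0 < ε) :
    ∃ K₀ : ℕ, ∀ K : ℕ, K₀ ≤ K →
      U + D < K ∧ ∃ a b : ℕ, 1 ≤ b ∧
        b * (U + 1) ≤ Nat.gcd (b * K) (b * (D + 1) + a) ∧ (a : ℝ) / b < ε := by
  obtain ⟨B, hB⟩ := exists_nat_gt (((D : ℝ) + 1) / ε)
  refine ⟨max (U + D + 1) ((B + 1) * (D + 1)), fun K hK => ?_⟩
  have hK1 : U + D + 1 ≤ K := le_trans (le_max_left _ _) hK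
  have hK2 : (B + 1) * (D + 1) ≤ K := le_trans (le_max_right _ _) hK
  refine ⟨hK1, K % (D + 1), K / (D + 1), ?_, ?_, ?_⟩
  · have : B + 1 ≤ K / (D + 1) := (Nat.le_div_iff_mul_le (Nat.succ_pos D)).mpr hK2
    omega
  · have heq : K / (D + 1) * (D + 1) + K % (D + 1) = K := by
      rw [mul_comm]; exact Nat.div_add_mod K (D + 1)
    rw [heq]
    have hg : Nat.gcd (K / (D + 1) * K) K = K := by
      rw [Nat.gcd_comm]
      exact Nat.gcd_eq_left (dvd_mul_left K _)
    rw [hg]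
    calc K / (D + 1) * (U + 1) ≤ K / (D + 1) * (D + 1) :=
          Nat.mul_le_mul_left _ (by omega)
      _ ≤ K := by omega
  · have hbB : B + 1 ≤ K / (D + 1) := (Nat.le_div_iff_mul_le (Nat.succ_pos D)).mpr hK2
    have hbpos : (0 : ℝ) < (K / (D + 1) : ℕ) := by
      exact_mod_cast Nat.lt_of_lt_of_le (Nat.succ_pos B) hbB
    rw [div_lt_iff₀ hbpos]
    have ha : K % (D + 1) < D + 1 := Nat.mod_lt _ (Nat.succ_pos D)
    have h1 : ((K % (D + 1) : ℕ) : ℝ) < (D : ℝ) + 1 := by exact_mod_cast ha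
    have h2 : (D : ℝ) + 1 < ε * B := by
      rw [div_lt_iff₀ hε] at hB; linarith
    have h3 : ε * B ≤ ε * (K / (D + 1) : ℕ) := by
      apply mul_le_mul_of_nonneg_left _ hε.le
      exact_mod_cast Nat.le_trans (Nat.le_succ B) hbB
    linarith

/-- Fix `0 ≤ U ≤ D`. For every `ε > 0` there is `K₀` such that for all
`K ≥ K₀` (in particular `U + D < K`) there is `(a,b) ∈ S_{K,D,U}` with `a/b < ε`;
consequently the infimum of the achievable rates `D + 1 + a/b` over `(a,b) ∈ S_{K,D,U}`
tends to `D + 1` as `K → ∞` (recovering the asymptotic capacity `1/(D+1)`). -/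
theorem rate_tendsto_capacity (D U : ℕ) (hUD : U ≤ D) :
    (∀ ε : ℝ, 0 < ε → ∃ K₀ : ℕ, ∀ K : ℕ, K₀ ≤ K →
      U + D < K ∧ ∃ a b : ℕ, 1 ≤ b ∧
        b * (U + 1) ≤ Nat.gcd (b * K) (b * (D + 1) + a) ∧ (a : ℝ) / b < ε) ∧
    Filter.Tendsto
      (fun K : ℕ => sInf {r : ℝ | ∃ a b : ℕ, 1 ≤ b ∧
        b * (U + 1) ≤ Nat.gcd (b * K) (b * (D + 1) + a) ∧ r = (D + 1 : ℝ) + (a : ℝ) / b})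
      Filter.atTop (nhds (D + 1 : ℝ)) := by
  constructor
  · exact fun ε hε => key_witness D U hUD ε hε
  · rw [Metric.tendsto_atTop]
    intro ε hε
    obtain ⟨K₀, hK₀⟩ := key_witness D U hUD (ε / 2) (by linarith)
    refine ⟨K₀, fun K hK => ?_⟩
    obtain ⟨-, a, b, hb, hgcd, hab⟩ := hK₀ K hK
    set S : Set ℝ := {r : ℝ | ∃ a b : ℕ, 1 ≤ b ∧
        b * (U + 1) ≤ Nat.gcd (b * K) (b * (D + 1) + a) ∧ r = (D + 1 : ℝ) + (a : ℝ) / b}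
    have hmem : (D + 1 : ℝ) + (a : ℝ) / b ∈ S := ⟨a, b, hb, hgcd, rfl⟩
    have hbdd : BddBelow S := by
      refine ⟨(D + 1 : ℝ), fun r hr => ?_⟩
      obtain ⟨a', b', hb', -, rfl⟩ := hr
      have : (0 : ℝ) ≤ (a' : ℝ) / b' := by positivity
      linarith
    have hlow : (D + 1 : ℝ) ≤ sInf S := by
      apply le_csInf ⟨_, hmem⟩
      rintro r ⟨a', b', hb', -, rfl⟩
      have : (0 : ℝ) ≤ (a' : ℝ) / b' := by positivity
      linarith
    have hup : sInf S ≤ (D + 1 : ℝ) + (a : ℝ) / b := csInf_le hbdd hmem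
    have habnn : (0 : ℝ) ≤ (a : ℝ) / b := by positivity
    rw [Real.dist_eq, abs_of_nonneg (by linarith)]
    linarith
end

section
/- Let m > n ≥ 1 be integers with gcd(m,n) < n, and let L be the AIR matrix of size m × n with Euclidean data λ_i, β_i, l. (a) Let i ≥ 0 be such that 2i ≤ l and λ_{2i} > 0, and let k be a column index with n − λ_{2i−1} ≤ k ≤ n − λ_{2i+1} − 1 (where λ_{−1} = n and λ_{l+1} = 0). Write k − (n − λ_{2i−1}) = c·λ_{2i} + d with integers c ≥ 0 and 0 ≤ d < λ_{2i}. Then the down-distance satisfies d_down(k) = m − n + λ_{2i+1} + (β_{2i} − 1 − c)·λ_{2i}. (b) If l is odd and n − λ_l ≤ k ≤ n − 1, then d_down(k) = m − n. -/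
set_option linter.unusedVariables false

/-- Euclidean data of the `m × n` AIR matrix: `airLam m n (i+1)` is `λ_i`
(the index is shifted by one, so that `airLam m n 0 = λ_{-1} = n`,
`airLam m n 1 = λ_0 = m - n`, and `λ_{i+1} = λ_{i-1} mod λ_i`). -/
def airLam (m n : ℕ) : ℕ → ℕ
  | 0 => n
  | 1 => m - n
  | i + 2 => if airLam m n (i + 1) = 0 then 0 else airLam m n i % airLam m n (i + 1)

/-- `airBeta m n i` is `β_i = ⌊λ_{i-1} / λ_i⌋` of the Euclidean data of the AIR matrix. -/
def airBeta (m n i : ℕ) : ℕ := airLam m n i / airLam m n (i + 1)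

/-- `IsDownDist m n k v` says that the down-distance of the diagonal entry `L(k,k)` of the
`m × n` AIR matrix equals `v`: `k + v` is the largest row index `k' > k` with `L(k',k) = 1`. -/
def IsDownDist (m n k v : ℕ) : Prop :=
  0 < v ∧ k + v < m ∧ airEntry m n (k + v) k = 1 ∧
    ∀ j : ℕ, k + v < j → j < m → airEntry m n j k = 0

/-! ### Auxiliary definitions and lemmas -/

/-- The largest row index carrying a `1` in column `k` of the `m × n` AIR matrix. -/
def maxRow : ℕ → ℕ → ℕ → ℕ
  | m, n, k =>
    if hn : n = 0 then 0
    else if hr : m % n = 0 then m - n + k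
    else if k < n - n % (m % n) then n * (m / n) + k % (m % n)
    else n * (m / n) + maxRow (m % n) (n % (m % n)) (k - (n - n % (m % n)))
  termination_by m n k => n
  decreasing_by
    have h1 : m % n < n := Nat.mod_lt _ (Nat.pos_of_ne_zero hn)
    have h2 : n % (m % n) < m % n := Nat.mod_lt _ (Nat.pos_of_ne_zero hr)
    omega

lemma maxRow_base {m n : ℕ} (k : ℕ) (hn : n ≠ 0) (hr : m % n = 0) :
    maxRow m n k = m - n + k := by
  rw [maxRow, dif_neg hn, dif_pos hr]

lemma maxRow_low {m n : ℕ} (k : ℕ) (hn : n ≠ 0) (hr : m % n ≠ 0)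
    (hk : k < n - n % (m % n)) :
    maxRow m n k = n * (m / n) + k % (m % n) := by
  rw [maxRow, dif_neg hn, dif_neg hr, if_pos hk]

lemma maxRow_high {m n : ℕ} (k : ℕ) (hn : n ≠ 0) (hr : m % n ≠ 0)
    (hk : ¬ k < n - n % (m % n)) :
    maxRow m n k = n * (m / n) + maxRow (m % n) (n % (m % n)) (k - (n - n % (m % n))) := by
  rw [maxRow, dif_neg hn, dif_neg hr, if_neg hk]

lemma airEntry_base {m n : ℕ} (j k : ℕ) (hn : n ≠ 0) (hr : m % n = 0) :
    airEntry m n j k = if j % n = k then 1 else 0 := by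
  rw [airEntry, dif_neg hn, dif_pos hr]

lemma airEntry_id {m n : ℕ} (j k : ℕ) (hn : n ≠ 0) (hr : m % n ≠ 0)
    (hj : j < m - m % n) :
    airEntry m n j k = if j % n = k then 1 else 0 := by
  rw [airEntry, dif_neg hn, dif_neg hr, if_pos hj]

lemma airEntry_bot_low {m n : ℕ} (j k : ℕ) (hn : n ≠ 0) (hr : m % n ≠ 0)
    (hj : ¬ j < m - m % n) (hk : k < n - n % (m % n)) :
    airEntry m n j k = if k % (m % n) = j - (m - m % n) then 1 else 0 := by
  rw [airEntry, dif_neg hn, dif_neg hr, if_neg hj, if_pos hk]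

lemma airEntry_bot_high {m n : ℕ} (j k : ℕ) (hn : n ≠ 0) (hr : m % n ≠ 0)
    (hj : ¬ j < m - m % n) (hk : ¬ k < n - n % (m % n)) :
    airEntry m n j k = airEntry (m % n) (n % (m % n)) (j - (m - m % n)) (k - (n - n % (m % n))) := by
  rw [airEntry, dif_neg hn, dif_neg hr, if_neg hj, if_neg hk]

lemma airLam_two (m n j : ℕ) :
    airLam m n (j + 2) = if airLam m n (j + 1) = 0 then 0
      else airLam m n j % airLam m n (j + 1) := by
  rw [airLam]

lemma airLam_zero_succ (m n j : ℕ) (h : airLam m n (j + 1) = 0) :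
    airLam m n (j + 2) = 0 := by
  rw [airLam_two, if_pos h]

lemma airLam_pos_mono (m n a b : ℕ) (ha : 1 ≤ a) (hab : a ≤ b)
    (h : 0 < airLam m n b) : 0 < airLam m n a := by
  by_contra hc
  push_neg at hc
  have ha0 : airLam m n a = 0 := by omega
  have key : ∀ t, airLam m n (a + t) = 0 := by
    intro t
    induction t with
    | zero => exact ha0
    | succ t ih =>
      have e : a + (t + 1) = (a + t - 1) + 2 := by omega
      rw [e]
      exact airLam_zero_succ m n _ (by
        have e2 : a + t - 1 + 1 = a + t := by omega
        rw [e2]; exact ih)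
  have := key (b - a)
  rw [show a + (b - a) = b by omega] at this
  omega

lemma airLam_anti_step (m n j : ℕ) : airLam m n (j + 3) ≤ airLam m n (j + 2) := by
  have : airLam m n ((j + 1) + 2) = if airLam m n (j + 2) = 0 then 0
      else airLam m n (j + 1) % airLam m n (j + 2) := airLam_two m n (j + 1)
  rw [show j + 3 = (j + 1) + 2 by omega, this]
  split
  · omega
  · exact le_of_lt (Nat.mod_lt _ (by omega))

lemma airLam_le_two (m n : ℕ) : ∀ t, airLam m n (2 + t) ≤ airLam m n 2 := by
  intro t
  induction t with
  | zero => exact le_rfl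
  | succ t ih =>
    have h1 := airLam_anti_step m n t
    rw [show 2 + (t + 1) = t + 3 from by omega]
    rw [show 2 + t = t + 2 from by omega] at ih
    omega

lemma airLam_congr (M N M' N' a b : ℕ)
    (h0 : airLam M N a = airLam M' N' b)
    (h1 : airLam M N (a + 1) = airLam M' N' (b + 1)) :
    ∀ t, airLam M N (a + t) = airLam M' N' (b + t) := by
  have key : ∀ t, airLam M N (a + t) = airLam M' N' (b + t) ∧
      airLam M N (a + t + 1) = airLam M' N' (b + t + 1) := by
    intro t
    induction t with
    | zero => exact ⟨h0, h1⟩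
    | succ t ih =>
      refine ⟨ih.2, ?_⟩
      show airLam M N ((a + t) + 2) = airLam M' N' ((b + t) + 2)
      rw [airLam_two, airLam_two, ih.1, ih.2]
  exact fun t => (key t).1

lemma airLam_e1 (n r : ℕ) : airLam (n + r) n 1 = r := by
  show n + r - n = r
  omega

lemma airLam_e2 (n r : ℕ) (hr : r ≠ 0) : airLam (n + r) n 2 = n % r := by
  rw [show (2:ℕ) = 0 + 2 by rfl, airLam_two]
  rw [show (0:ℕ) + 1 = 1 by rfl, airLam_e1]
  rw [if_neg hr]
  rfl

lemma airLam_e3 (n r : ℕ) (hr : r ≠ 0) (hs : n % r ≠ 0) :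
    airLam (n + r) n 3 = r % (n % r) := by
  rw [show (3:ℕ) = 1 + 2 by rfl, airLam_two]
  rw [show (1:ℕ) + 1 = 2 by rfl, airLam_e2 n r hr, if_neg hs, airLam_e1]

/-- Shift lemma for the recursive step: the Euclid data of the submatrix. -/
lemma airLam_shift_sub (n r : ℕ) (hr : r ≠ 0) (hs : n % r ≠ 0) (t : ℕ) :
    airLam (n + r) n (t + 2) = airLam (n % r + r % (n % r)) (n % r) t := by
  have h0 : airLam (n + r) n 2 = airLam (n % r + r % (n % r)) (n % r) 0 := by
    rw [airLam_e2 n r hr]; rfl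
  have h1 : airLam (n + r) n (2 + 1) = airLam (n % r + r % (n % r)) (n % r) (0 + 1) := by
    rw [show (2:ℕ) + 1 = 3 by rfl, airLam_e3 n r hr hs,
      show (0:ℕ) + 1 = 1 by rfl, airLam_e1]
  have := airLam_congr (n + r) n (n % r + r % (n % r)) (n % r) 2 0 h0 h1 t
  rw [show 2 + t = t + 2 by omega, show 0 + t = t by omega] at this
  exact this

/-- Shift lemma for the case `m > 2n`. -/
lemma airLam_shift_top (m n : ℕ) (hn : 0 < n) (h : 2 * n < m) (t : ℕ) :
    airLam m n (t + 2) = airLam (n + m % n) n t := by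
  have hmn : m - n ≠ 0 := by omega
  have h2 : airLam m n 2 = n := by
    rw [show (2:ℕ) = 0 + 2 by rfl, airLam_two]
    show (if m - n = 0 then 0 else n % (m - n)) = n
    rw [if_neg hmn]
    exact Nat.mod_eq_of_lt (by omega)
  have hmod : (m - n) % n = m % n := by
    conv_rhs => rw [show m = (m - n) + n by omega]
    rw [Nat.add_mod_right]
  have h3 : airLam m n 3 = m % n := by
    rw [show (3:ℕ) = 1 + 2 by rfl, airLam_two, show (1:ℕ) + 1 = 2 by rfl, h2, if_neg (by omega)]
    show (m - n) % n = m % n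
    exact hmod
  have h0 : airLam m n 2 = airLam (n + m % n) n 0 := by rw [h2]; rfl
  have h1 : airLam m n (2 + 1) = airLam (n + m % n) n (0 + 1) := by
    rw [show (2:ℕ) + 1 = 3 by rfl, h3, show (0:ℕ) + 1 = 1 by rfl, airLam_e1]
  have := airLam_congr m n (n + m % n) n 2 0 h0 h1 t
  rw [show 2 + t = t + 2 by omega, show 0 + t = t by omega] at this
  exact this

/-- Main spec: `maxRow m n k` is the largest row with a `1` in column `k`. -/
lemma maxRow_spec (n : ℕ) : ∀ m k, 1 ≤ n → n ≤ m → k < n →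
    maxRow m n k < m ∧ airEntry m n (maxRow m n k) k = 1 ∧
      ∀ j, maxRow m n k < j → j < m → airEntry m n j k = 0 := by
  induction n using Nat.strong_induction_on with
  | _ n IH =>
    intro m k hn hm hk
    have hn0 : n ≠ 0 := by omega
    by_cases hr : m % n = 0
    · -- base case: n ∣ m
      obtain ⟨q, hq⟩ : n ∣ m := Nat.dvd_of_mod_eq_zero hr
      have hq1 : 1 ≤ q := by
        rcases Nat.eq_zero_or_pos q with h | h
        · subst h; simp at hq; omega
        · exact h
      obtain ⟨q', rfl⟩ : ∃ q', q = q' + 1 := ⟨q - 1, by omega⟩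
      have hm' : m = n * q' + n := by rw [hq]; ring
      have hfr : maxRow m n k = m - n + k := maxRow_base k hn0 hr
      have hmnk : m - n + k = n * q' + k := by omega
      refine ⟨by omega, ?_, ?_⟩
      · have hcond : (m - n + k) % n = k := by
          rw [hmnk, Nat.mul_add_mod]; exact Nat.mod_eq_of_lt hk
        rw [hfr, airEntry_base _ _ hn0 hr, if_pos hcond]
      · intro j hj1 hj2
        rw [airEntry_base _ _ hn0 hr, if_neg]
        intro hjk
        have hdm : n * (j / n) + j % n = j := Nat.div_add_mod j n
        have hlt : n * q' < n * (j / n) := by omega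
        have : q' < j / n := Nat.lt_of_mul_lt_mul_left hlt
        have : n * (q' + 1) ≤ n * (j / n) := Nat.mul_le_mul_left n (by omega)
        have hexp : n * (q' + 1) = n * q' + n := by ring
        omega
    · -- recursive case
      have hrpos : 0 < m % n := by omega
      have hrn : m % n < n := Nat.mod_lt _ (by omega)
      have hsr : n % (m % n) < m % n := Nat.mod_lt _ (by omega)
      have hdm : n * (m / n) + m % n = m := Nat.div_add_mod m n
      have hmm : m - m % n = n * (m / n) := by omega
      by_cases hkl : k < n - n % (m % n)
      · -- low columns
        have hfr := maxRow_low k hn0 hr hkl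
        have hkr : k % (m % n) < m % n := Nat.mod_lt _ (by omega)
        refine ⟨by omega, ?_, ?_⟩
        · rw [hfr, airEntry_bot_low _ _ hn0 hr (by omega) hkl, if_pos (by omega)]
        · intro j hj1 hj2
          rw [hfr] at hj1
          rw [airEntry_bot_low _ _ hn0 hr (by omega) hkl, if_neg (by omega)]
      · -- high columns: recurse
        have hs0 : n % (m % n) ≠ 0 := by omega
        have hk' : k - (n - n % (m % n)) < n % (m % n) := by omega
        have hsub := IH (n % (m % n)) (by omega) (m % n) (k - (n - n % (m % n)))
          (by omega) (by omega) hk'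
        have hfr := maxRow_high k hn0 hr hkl
        obtain ⟨hs1, hs2, hs3⟩ := hsub
        refine ⟨by omega, ?_, ?_⟩
        · rw [hfr, airEntry_bot_high _ _ hn0 hr (by omega) hkl,
            show n * (m / n) + maxRow (m % n) (n % (m % n)) (k - (n - n % (m % n))) -
              (m - m % n) = maxRow (m % n) (n % (m % n)) (k - (n - n % (m % n))) by omega]
          exact hs2
        · intro j hj1 hj2
          rw [hfr] at hj1
          rw [airEntry_bot_high _ _ hn0 hr (by omega) hkl]
          exact hs3 _ (by omega) (by omega)

/-- Core computation, part (a). -/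
lemma core_a (n : ℕ) : ∀ m i k c d, 1 ≤ n → n < m → 0 < m % n →
    0 < airLam (n + m % n) n (2 * i + 1) →
    n ≤ k + airLam (n + m % n) n (2 * i) →
    k + airLam (n + m % n) n (2 * i + 2) + 1 ≤ n →
    d < airLam (n + m % n) n (2 * i + 1) →
    k + airLam (n + m % n) n (2 * i) = n + c * airLam (n + m % n) n (2 * i + 1) + d →
    maxRow m n k = k + (m - n) + airLam (n + m % n) n (2 * i + 2) +
      (airLam (n + m % n) n (2 * i) / airLam (n + m % n) n (2 * i + 1) - 1 - c) *
        airLam (n + m % n) n (2 * i + 1) := by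
  induction n using Nat.strong_induction_on with
  | _ n IH =>
    intro m i k c d hn hm hr h1 h2 h3 h4 h5
    have hn0 : n ≠ 0 := by omega
    have hr0 : m % n ≠ 0 := by omega
    have hrn : m % n < n := Nat.mod_lt _ (by omega)
    have hdm : n * (m / n) + m % n = m := Nat.div_add_mod m n
    have e1 : airLam (n + m % n) n 1 = m % n := airLam_e1 n (m % n)
    have e2 : airLam (n + m % n) n 2 = n % (m % n) := airLam_e2 n (m % n) hr0
    have hsmod : n % (m % n) < m % n := Nat.mod_lt _ (by omega)
    rcases i with _ | i'
    · -- zone i = 0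
      have E1 : airLam (n + m % n) n (2 * 0) = n := by norm_num [airLam]
      have E2 : airLam (n + m % n) n (2 * 0 + 1) = m % n := by
        rw [show 2 * 0 + 1 = 1 by norm_num]; exact e1
      have E3 : airLam (n + m % n) n (2 * 0 + 2) = n % (m % n) := by
        rw [show 2 * 0 + 2 = 2 by norm_num]; exact e2
      rw [E1] at h2 h5
      rw [E2] at h1 h4 h5
      rw [E3] at h3
      rw [E1, E2, E3]
      have hk : k = c * (m % n) + d := by omega
      have hklow : k < n - n % (m % n) := by omega
      rw [maxRow_low k hn0 hr0 hklow]
      have hkr : k % (m % n) = d := by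
        rw [hk, Nat.mul_add_mod']; exact Nat.mod_eq_of_lt h4
      have hnd : (m % n) * (n / (m % n)) + n % (m % n) = n := Nat.div_add_mod n (m % n)
      have hcb : c + 1 ≤ n / (m % n) := by
        by_contra hc
        push_neg at hc
        have hle : (m % n) * (n / (m % n)) ≤ (m % n) * c :=
          Nat.mul_le_mul_left _ (by omega)
        have hcc : (m % n) * c = c * (m % n) := Nat.mul_comm _ _
        omega
      have hmul : (n / (m % n) - 1 - c) * (m % n) + (c + 1) * (m % n) =
          (n / (m % n)) * (m % n) := by
        rw [← Nat.add_mul]; congr 1; omega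
      have hcm : (c + 1) * (m % n) = c * (m % n) + m % n := by ring
      have hnm2 : (n / (m % n)) * (m % n) = (m % n) * (n / (m % n)) := Nat.mul_comm _ _
      rw [hkr]
      omega
    · -- zone i = i' + 1 : recurse
      have hpos3 : 0 < airLam (n + m % n) n 3 :=
        airLam_pos_mono _ _ 3 (2 * (i' + 1) + 1) (by omega) (by omega) h1
      have hpos2 : 0 < airLam (n + m % n) n 2 :=
        airLam_pos_mono _ _ 2 3 (by omega) (by omega) hpos3
      have hs0 : n % (m % n) ≠ 0 := by omega
      have e3 : airLam (n + m % n) n 3 = (m % n) % (n % (m % n)) :=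
        airLam_e3 n (m % n) hr0 hs0
      have hrs0 : (m % n) % (n % (m % n)) ≠ 0 := by omega
      have Esh := airLam_shift_sub n (m % n) hr0 hs0
      have E1 : airLam (n + m % n) n (2 * (i' + 1)) =
          airLam (n % (m % n) + (m % n) % (n % (m % n))) (n % (m % n)) (2 * i') := by
        rw [show 2 * (i' + 1) = 2 * i' + 2 from by omega]; exact Esh _
      have E2 : airLam (n + m % n) n (2 * (i' + 1) + 1) =
          airLam (n % (m % n) + (m % n) % (n % (m % n))) (n % (m % n)) (2 * i' + 1) := by
        rw [show 2 * (i' + 1) + 1 = (2 * i' + 1) + 2 from by omega]; exact Esh _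
      have E3 : airLam (n + m % n) n (2 * (i' + 1) + 2) =
          airLam (n % (m % n) + (m % n) % (n % (m % n))) (n % (m % n)) (2 * i' + 2) := by
        rw [show 2 * (i' + 1) + 2 = (2 * i' + 2) + 2 from by omega]; exact Esh _
      have hle2 : airLam (n + m % n) n (2 * (i' + 1)) ≤ airLam (n + m % n) n 2 := by
        have := airLam_le_two (n + m % n) n (2 * i')
        rw [show 2 + 2 * i' = 2 * (i' + 1) from by omega] at this
        exact this
      have hkh : ¬ k < n - n % (m % n) := by omega
      rw [E1] at h2 h5
      rw [E2] at h1 h4 h5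
      rw [E3] at h3
      rw [E1, E2, E3]
      rw [maxRow_high k hn0 hr0 hkh]
      have IHr := IH (n % (m % n)) (by omega) (m % n) i' (k - (n - n % (m % n))) c d
        (by omega) (by omega) (by omega) h1
        (by omega) (by omega) h4 (by omega)
      rw [IHr]
      omega

/-- Core computation, part (b). -/
lemma core_b (n : ℕ) : ∀ m l k, 1 ≤ n → n < m → 0 < m % n → Odd l →
    0 < airLam (n + m % n) n (l + 1) → airLam (n + m % n) n (l + 2) = 0 →
    n ≤ k + airLam (n + m % n) n (l + 1) → k < n →
    maxRow m n k = k + (m - n) := by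
  induction n using Nat.strong_induction_on with
  | _ n IH =>
    intro m l k hn hm hr hodd hpos hzero hk1 hk2
    have hn0 : n ≠ 0 := by omega
    have hr0 : m % n ≠ 0 := by omega
    have hrn : m % n < n := Nat.mod_lt _ (by omega)
    have hdm : n * (m / n) + m % n = m := Nat.div_add_mod m n
    have hsmod : n % (m % n) < m % n := Nat.mod_lt _ (by omega)
    rcases Nat.lt_or_ge l 2 with hcase | hcase
    · have : l = 1 := by rcases hodd with ⟨w, hw⟩; omega
      subst this
      -- l = 1 : base case, n % (m % n) divides m % n
      have hpos2 : 0 < airLam (n + m % n) n 2 := by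
        rw [show (1:ℕ) + 1 = 2 by rfl] at hpos; exact hpos
      rw [airLam_e2 n (m % n) hr0] at hpos2
      have hs0 : n % (m % n) ≠ 0 := by omega
      have hzero3 : airLam (n + m % n) n 3 = 0 := by
        rw [show (1:ℕ) + 2 = 3 by rfl] at hzero; exact hzero
      rw [airLam_e3 n (m % n) hr0 hs0] at hzero3
      rw [show (1:ℕ) + 1 = 2 by rfl, airLam_e2 n (m % n) hr0] at hk1
      have hkh : ¬ k < n - n % (m % n) := by omega
      rw [maxRow_high k hn0 hr0 hkh,
        maxRow_base (k - (n - n % (m % n))) hs0 hzero3]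
      omega
    · obtain ⟨l2, rfl⟩ : ∃ l2, l = l2 + 2 := ⟨l - 2, by omega⟩
      have hodd2 : Odd l2 := by
        rcases hodd with ⟨w, hw⟩; exact ⟨w - 1, by omega⟩
      have hpos3 : 0 < airLam (n + m % n) n 3 :=
        airLam_pos_mono _ _ 3 (l2 + 2 + 1) (by omega) (by omega) hpos
      have hpos2 : 0 < airLam (n + m % n) n 2 :=
        airLam_pos_mono _ _ 2 3 (by omega) (by omega) hpos3
      have e2 : airLam (n + m % n) n 2 = n % (m % n) := airLam_e2 n (m % n) hr0
      have hs0 : n % (m % n) ≠ 0 := by omega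
      have e3 : airLam (n + m % n) n 3 = (m % n) % (n % (m % n)) :=
        airLam_e3 n (m % n) hr0 hs0
      have hrs0 : (m % n) % (n % (m % n)) ≠ 0 := by omega
      have Esh := airLam_shift_sub n (m % n) hr0 hs0
      have E1 : airLam (n + m % n) n (l2 + 2 + 1) =
          airLam (n % (m % n) + (m % n) % (n % (m % n))) (n % (m % n)) (l2 + 1) := by
        rw [show l2 + 2 + 1 = (l2 + 1) + 2 from by omega]; exact Esh _
      have E2 : airLam (n + m % n) n (l2 + 2 + 2) =
          airLam (n % (m % n) + (m % n) % (n % (m % n))) (n % (m % n)) (l2 + 2) := by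
        rw [show l2 + 2 + 2 = (l2 + 2) + 2 from by omega]; exact Esh _
      have hle2 : airLam (n + m % n) n (l2 + 2 + 1) ≤ airLam (n + m % n) n 2 := by
        have := airLam_le_two (n + m % n) n (l2 + 1)
        rw [show 2 + (l2 + 1) = l2 + 2 + 1 from by omega] at this
        exact this
      have hkh : ¬ k < n - n % (m % n) := by omega
      rw [E1] at hpos hk1
      rw [E2] at hzero
      have IHr := IH (n % (m % n)) (by omega) (m % n) l2 (k - (n - n % (m % n)))
        (by omega) (by omega) (by omega) hodd2 hpos hzero (by omega) (by omega)
      rw [maxRow_high k hn0 hr0 hkh, IHr]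
      omega

/-- Down-distances in the `m × n` AIR matrix (with `λ_i = airLam m n (i+1)`
and `β_i = airBeta m n i`, where `l` is the largest index with `λ_l > 0`):
(a) if `2i ≤ l`, `λ_{2i} > 0` and the column `k` satisfies
`n - λ_{2i-1} ≤ k ≤ n - λ_{2i+1} - 1`, with `k - (n - λ_{2i-1}) = c·λ_{2i} + d`,
`0 ≤ d < λ_{2i}`, then `d_down(k) = m - n + λ_{2i+1} + (β_{2i} - 1 - c)·λ_{2i}`;
(b) if `l` is odd and `n - λ_l ≤ k ≤ n - 1` then `d_down(k) = m - n`. -/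
theorem air_down_distance (m n : ℕ) (hn : 1 ≤ n) (hnm : n < m)
    (hg : Nat.gcd m n < n)
    (l : ℕ) (hl : 0 < airLam m n (l + 1)) (hl' : airLam m n (l + 2) = 0) :
    (∀ i k c d : ℕ, 2 * i ≤ l → 0 < airLam m n (2 * i + 1) →
      n ≤ k + airLam m n (2 * i) → k + airLam m n (2 * i + 2) + 1 ≤ n →
      d < airLam m n (2 * i + 1) →
      k + airLam m n (2 * i) = n + c * airLam m n (2 * i + 1) + d →
      IsDownDist m n k
        (m - n + airLam m n (2 * i + 2) + (airBeta m n (2 * i) - 1 - c) * airLam m n (2 * i + 1))) ∧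
    (Odd l → ∀ k : ℕ, n ≤ k + airLam m n (l + 1) → k < n → IsDownDist m n k (m - n)) := by
  have hr0 : m % n ≠ 0 := by
    intro h
    have hdvd : n ∣ m := Nat.dvd_of_mod_eq_zero h
    have : Nat.gcd m n = n := by rw [Nat.gcd_comm]; exact Nat.gcd_eq_left hdvd
    omega
  have hrn : m % n < n := Nat.mod_lt _ (by omega)
  have hdm : n * (m / n) + m % n = m := Nat.div_add_mod m n
  have hspec := maxRow_spec n m
  by_cases hm2 : m < 2 * n
  · -- case n < m < 2n : λ-sequence is literally that of (n + m % n, n)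
    have hmod : m % n = m - n := by
      rw [Nat.mod_eq_sub_mod (by omega : n ≤ m)]
      exact Nat.mod_eq_of_lt (by omega)
    have hmeq : n + m % n = m := by omega
    have Lconv : ∀ j, airLam m n j = airLam (n + m % n) n j := by
      intro j; rw [hmeq]
    constructor
    · intro i k c d h0 h1 h2 h3 h4 h5
      have hkn : k < n := by omega
      rw [Lconv (2 * i + 1)] at h1 h4
      rw [Lconv (2 * i)] at h2 h5
      rw [Lconv (2 * i + 2)] at h3
      rw [Lconv (2 * i + 1)] at h5
      have hval := core_a n m i k c d hn hnm (by omega) h1 h2 h3 h4 h5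
      obtain ⟨hs1, hs2, hs3⟩ := hspec k hn (by omega) hkn
      simp only [IsDownDist, airBeta]
      rw [Lconv (2 * i + 2), Lconv (2 * i), Lconv (2 * i + 1)]
      refine ⟨by omega, by omega, ?_, ?_⟩
      · rw [show k + (m - n + airLam (n + m % n) n (2 * i + 2) +
          (airLam (n + m % n) n (2 * i) / airLam (n + m % n) n (2 * i + 1) - 1 - c) *
            airLam (n + m % n) n (2 * i + 1)) = maxRow m n k from by omega]
        exact hs2
      · intro j hj1 hj2
        exact hs3 j (by omega) hj2
    · intro hodd k hk1 hk2
      rw [Lconv (l + 1)] at hl hk1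
      rw [Lconv (l + 2)] at hl'
      have hval := core_b n m l k hn hnm (by omega) hodd hl hl' hk1 hk2
      obtain ⟨hs1, hs2, hs3⟩ := hspec k hn (by omega) hk2
      refine ⟨by omega, by omega, ?_, ?_⟩
      · rw [show k + (m - n) = maxRow m n k from by omega]
        exact hs2
      · intro j hj1 hj2
        exact hs3 j (by omega) hj2
  · -- case m > 2n
    have hne : m ≠ 2 * n := by
      intro h; rw [h] at hr0; exact hr0 (Nat.mul_mod_left 2 n)
    have hm2' : 2 * n < m := by omega
    have Ltop : ∀ t, airLam m n (t + 2) = airLam (n + m % n) n t :=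
      airLam_shift_top m n (by omega) hm2'
    have hA2 : airLam m n 2 = n := by
      rw [show (2:ℕ) = 0 + 2 by rfl, Ltop]; rfl
    have hA3 : airLam m n 3 = m % n := by
      rw [show (3:ℕ) = 1 + 2 by rfl, Ltop]; exact airLam_e1 n (m % n)
    constructor
    · intro i k c d h0 h1 h2 h3 h4 h5
      rcases i with _ | i'
      · rw [show 2 * 0 + 2 = 2 by norm_num, hA2] at h3
        omega
      · have F1 : airLam m n (2 * (i' + 1)) = airLam (n + m % n) n (2 * i') := by
          rw [show 2 * (i' + 1) = 2 * i' + 2 from by omega]; exact Ltop _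
        have F2 : airLam m n (2 * (i' + 1) + 1) = airLam (n + m % n) n (2 * i' + 1) := by
          rw [show 2 * (i' + 1) + 1 = (2 * i' + 1) + 2 from by omega]; exact Ltop _
        have F3 : airLam m n (2 * (i' + 1) + 2) = airLam (n + m % n) n (2 * i' + 2) := by
          rw [show 2 * (i' + 1) + 2 = (2 * i' + 2) + 2 from by omega]; exact Ltop _
        have hkn : k < n := by omega
        rw [F2] at h1 h4
        rw [F1] at h2 h5
        rw [F3] at h3
        rw [F2] at h5
        have hval := core_a n m i' k c d hn hnm (by omega) h1 h2 h3 h4 h5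
        obtain ⟨hs1, hs2, hs3⟩ := hspec k hn (by omega) hkn
        simp only [IsDownDist, airBeta]
        rw [F3, F1, F2]
        refine ⟨by omega, by omega, ?_, ?_⟩
        · rw [show k + (m - n + airLam (n + m % n) n (2 * i' + 2) +
            (airLam (n + m % n) n (2 * i') / airLam (n + m % n) n (2 * i' + 1) - 1 - c) *
              airLam (n + m % n) n (2 * i' + 1)) = maxRow m n k from by omega]
          exact hs2
        · intro j hj1 hj2
          exact hs3 j (by omega) hj2
    · intro hodd k hk1 hk2
      have hl2 : 2 ≤ l := by
        by_contra hc
        push_neg at hc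
        interval_cases l
        · rw [show (0:ℕ) + 2 = 2 by rfl, hA2] at hl'; omega
        · rw [show (1:ℕ) + 2 = 3 by rfl, hA3] at hl'; omega
      obtain ⟨l2, rfl⟩ : ∃ l2, l = l2 + 2 := ⟨l - 2, by omega⟩
      have hodd2 : Odd l2 := by
        rcases hodd with ⟨w, hw⟩; exact ⟨w - 1, by omega⟩
      have G1 : airLam m n (l2 + 2 + 1) = airLam (n + m % n) n (l2 + 1) := by
        rw [show l2 + 2 + 1 = (l2 + 1) + 2 from by omega]; exact Ltop _
      have G2 : airLam m n (l2 + 2 + 2) = airLam (n + m % n) n (l2 + 2) := by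
        rw [show l2 + 2 + 2 = (l2 + 2) + 2 from by omega]; exact Ltop _
      rw [G1] at hl hk1
      rw [G2] at hl'
      have hval := core_b n m l2 k hn hnm (by omega) hodd2 hl hl' hk1 hk2
      obtain ⟨hs1, hs2, hs3⟩ := hspec k hn (by omega) hk2
      refine ⟨by omega, by omega, ?_, ?_⟩
      · rw [show k + (m - n) = maxRow m n k from by omega]
        exact hs2
      · intro j hj1 hj2
        exact hs3 j (by omega) hj2
end
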